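/- arXiv:2108.05049 — 7 statements merged into one kernel-verified Lean document; each statement's English description precedes it below -/
import Mathlib

section
/- Let λ ≠ 0 and let p(x) be a polynomial of degree n with complex coefficients, expressed as p(x) = ∑_{k=0}^{n} a_k β_{k,λ}(x) in terms of degenerate Bernoulli polynomials. Then for 1 ≤ k ≤ n, a_k = (1/(k! λ^{k-1})) ∑_{j=0}^{k-1} C(k-1,j) (-1)^{k-1-j} (p(1 + jλ) - p(jλ)). -/
/-!
The degenerate falling factorials satisfy the Vandermonde identity
`(x + y)_{n,λ} = ∑ C(n,i) (x)_{i,λ} (y)_{n-i,λ}`, i.e. `e_λ^{x+1}(t) = e_λ^x(t) e_λ(t)`.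
Shifting `x ↦ x + 1` therefore multiplies the generating function of the `β_{m,λ}` by `e_λ(t)`,
and cancelling `e_λ(t) - 1` gives `β_{m,λ}(x + 1) - β_{m,λ}(x) = m (x)_{m-1,λ}`.
So `p(x + 1) - p(x) = ∑ m a_m (x)_{m-1,λ}`, and the `(k-1)`-st forward difference with step `λ`
at `0` isolates `a_k`: `(jλ)_{m,λ} = λ^m m! C(j,m)` and `∑_j (-1)^{K-j} C(K,j) C(j,m) = δ_{K,m}`.
-/

open Polynomial

/-- The degenerate falling factorial `(x)_{n,λ} = x(x-λ)⋯(x-(n-1)λ)` as a polynomial in `x`. -/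
noncomputable def degFall (lam : ℝ) (n : ℕ) : Polynomial ℝ :=
  ∏ i ∈ Finset.range n, (Polynomial.X - Polynomial.C ((i : ℝ) * lam))

/-- The degenerate exponential `e_λ^x(t) = (1+λt)^{x/λ} = ∑_{n≥0} (x)_{n,λ} t^n/n!`,
as a formal power series in `t` with coefficients polynomials in `x`. -/
noncomputable def degExpX (lam : ℝ) : PowerSeries (Polynomial ℝ) :=
  PowerSeries.mk fun n => ((n.factorial : ℝ)⁻¹) • degFall lam n

/-- `e_λ(t) = e_λ^1(t)`, as a constant-coefficient power series. -/
noncomputable def degExpOne (lam : ℝ) : PowerSeries (Polynomial ℝ) :=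
  PowerSeries.mk fun n => Polynomial.C ((n.factorial : ℝ)⁻¹ * (degFall lam n).eval 1)

/-- `β` is the family of degenerate Bernoulli polynomials of order `r`, i.e.
`(t/(e_λ(t)-1))^r e_λ^x(t) = ∑_{n≥0} β_n(x) t^n/n!`, stated in the denominator-free form
`(∑ β_n(x) t^n/n!) ⬝ (e_λ(t)-1)^r = t^r e_λ^x(t)`. -/
def IsDegBernoulli (lam : ℝ) (r : ℕ) (β : ℕ → Polynomial ℝ) : Prop :=
  (PowerSeries.mk fun n => ((n.factorial : ℝ)⁻¹) • β n) * (degExpOne lam - 1) ^ r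
    = (PowerSeries.X : PowerSeries (Polynomial ℝ)) ^ r * degExpX lam

open Finset

lemma sum_alternating_choose_mul_choose (K m : ℕ) :
    ∑ j ∈ range (K + 1), (-1 : ℤ) ^ (K - j) * K.choose j * j.choose m = if K = m then 1 else 0 := by
  rw [← fwdDiff_iter_choose_zero, fwdDiff_iter_eq_sum_shift]
  simp

section DegFall

variable (lam : ℝ)

lemma degFall_eval_succ (n : ℕ) (x : ℝ) :
    (degFall lam (n + 1)).eval x = (degFall lam n).eval x * (x - n * lam) := by
  simp [degFall, prod_range_succ, eval_prod]

theorem degFall_eval_add (n : ℕ) (x y : ℝ) :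
    (degFall lam n).eval (x + y) = ∑ ij ∈ antidiagonal n,
      (n.choose ij.1 : ℝ) * ((degFall lam ij.1).eval x * (degFall lam ij.2).eval y) := by
  induction n with
  | zero => simp [degFall]
  | succ n ih =>
    rw [sum_antidiagonal_choose_succ_mul
      (fun i j => (degFall lam i).eval x * (degFall lam j).eval y),
      degFall_eval_succ, ih, sum_mul, ← sum_add_distrib]
    refine sum_congr rfl fun ij hij => ?_
    have hij : n = ij.1 + ij.2 := (mem_antidiagonal.mp hij).symm
    rw [← Nat.choose_symm_of_eq_add hij, degFall_eval_succ, degFall_eval_succ, hij]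
    push_cast
    ring

lemma degFall_eval_natCast_mul (m j : ℕ) :
    (degFall lam m).eval (j * lam) = lam ^ m * m.factorial * j.choose m := by
  have h : (degFall lam m).eval (j * lam) = lam ^ m * (descPochhammer ℝ m).eval (j : ℝ) := by
    simp only [degFall, eval_prod, eval_sub, eval_X, eval_C, descPochhammer_eval_eq_prod_range]
    rw [prod_congr rfl fun i _ => (by ring : (j : ℝ) * lam - (i : ℕ) * lam = lam * (j - i)),
      prod_mul_distrib, prod_const, card_range]
  rw [h, descPochhammer_eval_eq_descFactorial, Nat.descFactorial_eq_factorial_mul_choose]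
  push_cast
  ring

lemma sum_alternating_choose_mul_degFall_eval (K m : ℕ) :
    ∑ j ∈ range (K + 1), (K.choose j : ℝ) * (-1) ^ (K - j) * (degFall lam m).eval (j * lam) =
      if K = m then lam ^ K * K.factorial else 0 := by
  have h := congrArg (Int.cast : ℤ → ℝ) (sum_alternating_choose_mul_choose K m)
  push_cast at h
  calc ∑ j ∈ range (K + 1), (K.choose j : ℝ) * (-1) ^ (K - j) * (degFall lam m).eval (j * lam)
      = lam ^ m * m.factorial *
          ∑ j ∈ range (K + 1), (-1 : ℝ) ^ (K - j) * K.choose j * j.choose m := by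
        rw [mul_sum]
        exact sum_congr rfl fun j _ => by rw [degFall_eval_natCast_mul]; ring
    _ = if K = m then lam ^ K * K.factorial else 0 := by
        rw [h]
        split_ifs with hKm
        · rw [hKm, mul_one]
        · rw [mul_zero]

lemma map_compRingHom_degExpOne :
    PowerSeries.map (compRingHom (X + 1)) (degExpOne lam) = degExpOne lam := by
  ext n
  simp [degExpOne]

lemma map_compRingHom_degExpX :
    PowerSeries.map (compRingHom (X + 1)) (degExpX lam) = degExpX lam * degExpOne lam := by
  ext n : 1
  refine Polynomial.funext fun x => ?_
  simp only [PowerSeries.coeff_map, PowerSeries.coeff_mul, degExpX, degExpOne,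
    PowerSeries.coeff_mk, coe_compRingHom, smul_comp, eval_smul, eval_comp, eval_add, eval_X,
    eval_one, eval_finsetSum, eval_mul, eval_C, smul_eq_mul, degFall_eval_add, mul_sum]
  refine sum_congr rfl fun ij hij => ?_
  obtain rfl : ij.1 + ij.2 = n := mem_antidiagonal.mp hij
  have h := Nat.add_choose_mul_factorial_mul_factorial ij.1 ij.2
  rw [← Nat.choose_symm_add] at h
  have h1 := Nat.factorial_ne_zero ij.1
  have h2 := Nat.factorial_ne_zero ij.2
  have h3 := (Nat.choose_pos (Nat.le_add_right ij.1 ij.2)).ne'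
  rw [← h]
  push_cast
  field_simp

lemma degExpOne_sub_one_ne_zero : degExpOne lam - 1 ≠ 0 := by
  intro h
  have h1 := congrArg (PowerSeries.coeff 1) h
  simp [degExpOne, degFall] at h1

lemma coeff_X_mul_degExpX (m : ℕ) :
    PowerSeries.coeff m (PowerSeries.X * degExpX lam) =
      ((m.factorial : ℝ)⁻¹ * m) • degFall lam (m - 1) := by
  cases m with
  | zero => simp
  | succ m =>
    have := Nat.factorial_ne_zero m
    rw [PowerSeries.coeff_succ_X_mul, degExpX, PowerSeries.coeff_mk, Nat.factorial_succ,
      Nat.add_sub_cancel]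
    congr 1
    push_cast
    field_simp

end DegFall

theorem IsDegBernoulli.comp_X_add_one_sub {lam : ℝ} {β : ℕ → ℝ[X]} (hβ : IsDegBernoulli lam 1 β)
    (m : ℕ) : (β m).comp (X + 1) - β m = (m : ℝ) • degFall lam (m - 1) := by
  set B : PowerSeries ℝ[X] := PowerSeries.mk fun n => ((n.factorial : ℝ)⁻¹) • β n
  set shift := PowerSeries.map (compRingHom (X + 1 : ℝ[X]))
  rw [IsDegBernoulli, pow_one, pow_one] at hβ
  have hshift : shift B = B * degExpOne lam := by
    apply mul_right_cancel₀ (degExpOne_sub_one_ne_zero lam)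
    calc shift B * (degExpOne lam - 1) = shift (B * (degExpOne lam - 1)) := by
          rw [map_mul, map_sub, map_one, map_compRingHom_degExpOne]
      _ = PowerSeries.X * degExpX lam * degExpOne lam := by
          rw [hβ, map_mul, PowerSeries.map_X, map_compRingHom_degExpX, mul_assoc]
      _ = B * degExpOne lam * (degExpOne lam - 1) := by rw [← hβ]; ring
  have hdiff : shift B - B = PowerSeries.X * degExpX lam := by rw [hshift, ← hβ]; ring
  have hm := congrArg (PowerSeries.coeff m) hdiff
  rw [coeff_X_mul_degExpX, map_sub, PowerSeries.coeff_map, PowerSeries.coeff_mk,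
    coe_compRingHom_apply, smul_comp, ← smul_sub, mul_smul] at hm
  exact smul_right_injective _ (inv_ne_zero (Nat.cast_ne_zero.mpr (Nat.factorial_ne_zero m))) hm

lemma IsDegBernoulli.eval_add_one_sub {lam : ℝ} {β : ℕ → ℝ[X]} (hβ : IsDegBernoulli lam 1 β)
    (m : ℕ) (x : ℝ) : (β m).eval (x + 1) - (β m).eval x = m * (degFall lam (m - 1)).eval x := by
  simpa using congrArg (eval x) (hβ.comp_X_add_one_sub m)

lemma IsDegBernoulli.eval_one_add_sub {lam : ℝ} {β : ℕ → ℝ[X]} (hβ : IsDegBernoulli lam 1 β)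
    {s : Finset ℕ} {p : ℂ[X]} {a : ℕ → ℂ}
    (hp : p = ∑ k ∈ s, a k • (β k).map (algebraMap ℝ ℂ)) (x : ℝ) :
    p.eval (1 + (x : ℂ)) - p.eval (x : ℂ) =
      ∑ m ∈ s, a m * (m * (degFall lam (m - 1)).eval x : ℝ) := by
  simp only [hp, eval_finsetSum, eval_smul, smul_eq_mul, eval_map_algebraMap, ← sum_sub_distrib,
    ← mul_sub]
  refine sum_congr rfl fun m _ => ?_
  rw [← hβ.eval_add_one_sub, add_comm (1 : ℂ), ← Complex.ofReal_one, ← Complex.ofReal_add,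
    ← Complex.coe_algebraMap, aeval_algebraMap_apply_eq_algebraMap_eval,
    aeval_algebraMap_apply_eq_algebraMap_eval, map_sub]

theorem IsDegBernoulli.sum_alternating_choose_mul_eval_sub {lam : ℝ} {β : ℕ → ℝ[X]}
    (hβ : IsDegBernoulli lam 1 β) {n : ℕ} {p : ℂ[X]} {a : ℕ → ℂ}
    (hp : p = ∑ k ∈ range (n + 1), a k • (β k).map (algebraMap ℝ ℂ)) {K : ℕ} (hK : K + 1 ≤ n) :
    ∑ j ∈ range (K + 1), (K.choose j : ℂ) * (-1) ^ (K - j) *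
        (p.eval (1 + (j : ℂ) * (lam : ℂ)) - p.eval ((j : ℂ) * (lam : ℂ))) =
      a (K + 1) * ((K + 1).factorial * lam ^ K) := by
  calc ∑ j ∈ range (K + 1), (K.choose j : ℂ) * (-1) ^ (K - j) *
          (p.eval (1 + (j : ℂ) * (lam : ℂ)) - p.eval ((j : ℂ) * (lam : ℂ)))
      = ∑ m ∈ range (n + 1), a m * m * (∑ j ∈ range (K + 1),
          (K.choose j : ℝ) * (-1) ^ (K - j) * (degFall lam (m - 1)).eval (j * lam) : ℝ) := by
        simp_rw [← Complex.ofReal_natCast, ← Complex.ofReal_mul, hβ.eval_one_add_sub hp, mul_sum]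
        rw [sum_comm]
        refine sum_congr rfl fun m _ => ?_
        push_cast
        rw [mul_sum]
        exact sum_congr rfl fun j _ => by ring
    _ = ∑ m ∈ range (n + 1), a m * m * (if K = m - 1 then lam ^ K * K.factorial else 0 : ℝ) := by
        simp_rw [sum_alternating_choose_mul_degFall_eval]
    _ = a (K + 1) * ((K + 1).factorial * lam ^ K) := by
        rw [sum_eq_single (K + 1)]
        · rw [Nat.add_sub_cancel, if_pos rfl, Nat.factorial_succ]
          push_cast
          ring
        · intro m _ hm
          rcases m with _ | m
          · simp
          · rw [if_neg (by omega), Complex.ofReal_zero, mul_zero]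
        · exact fun h => absurd (mem_range.mpr (by omega)) h

theorem degBernoulli_coeff_formula_general (lam : ℝ) (hlam : lam ≠ 0) (β : ℕ → Polynomial ℝ)
    (hβ : IsDegBernoulli lam 1 β) (n : ℕ) (p : Polynomial ℂ)
    (a : ℕ → ℂ) (hp : p = ∑ k ∈ Finset.range (n + 1), a k • (β k).map (algebraMap ℝ ℂ)) :
    ∀ k, 1 ≤ k → k ≤ n →
      a k = (1 / ((k.factorial : ℂ) * (lam : ℂ) ^ (k - 1))) *
        ∑ j ∈ Finset.range k, ((k - 1).choose j : ℂ) * (-1) ^ (k - 1 - j) *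
          (p.eval (1 + (j : ℂ) * (lam : ℂ)) - p.eval ((j : ℂ) * (lam : ℂ))) := by
  intro k hk hkn
  obtain ⟨K, rfl⟩ := Nat.exists_eq_add_of_le' hk
  rw [Nat.add_sub_cancel, hβ.sum_alternating_choose_mul_eval_sub hp hkn]
  have hlam' : (lam : ℂ) ≠ 0 := Complex.ofReal_ne_zero.mpr hlam
  have hfac : ((K + 1).factorial : ℂ) ≠ 0 := mod_cast Nat.factorial_ne_zero _
  field_simp

/-- If `p` has degree `n` and `p(x) = ∑_{k=0}^n a_k β_{k,λ}(x)`, then for `1 ≤ k ≤ n`,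
`a_k = (1/(k! λ^{k-1})) ∑_{j=0}^{k-1} C(k-1,j)(-1)^{k-1-j}(p(1+jλ) - p(jλ))`. -/
theorem degBernoulli_coeff_formula (lam : ℝ) (hlam : lam ≠ 0) (β : ℕ → Polynomial ℝ)
    (hβ : IsDegBernoulli lam 1 β) (n : ℕ) (p : Polynomial ℂ) (hdeg : p.natDegree = n)
    (a : ℕ → ℂ) (hp : p = ∑ k ∈ Finset.range (n + 1), a k • (β k).map (algebraMap ℝ ℂ)) :
    ∀ k, 1 ≤ k → k ≤ n →
      a k = (1 / ((k.factorial : ℂ) * (lam : ℂ) ^ (k - 1))) *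
        ∑ j ∈ Finset.range k, ((k - 1).choose j : ℂ) * (-1) ^ (k - 1 - j) *
          (p.eval (1 + (j : ℂ) * (lam : ℂ)) - p.eval ((j : ℂ) * (lam : ℂ))) :=
  degBernoulli_coeff_formula_general lam hlam β hβ n p a hp
end

section
/- For all real x ≠ 0, the identity ∑_{j=0}^{n} C(n,j) B_{n-j} x^{j+1} (B_{j+1}(1/x) - B_{j+1})/(j+1) = x^n B_n holds. -/
open Finset

lemma aux_sum (n i : ℕ) (hi : i ≤ n) :
    ∑ j ∈ Finset.Icc i n,
        (n.choose j : ℚ) * bernoulli (n - j) * ((j + 1).choose i) / (j + 1)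
      = if i = n then 1 else 0 := by
  have hn1 : ((n : ℚ) + 1) ≠ 0 := by positivity
  refine mul_right_cancel₀ hn1 ?_
  rw [Finset.sum_mul]
  have step : ∀ j ∈ Finset.Icc i n,
      (n.choose j : ℚ) * bernoulli (n - j) * ((j + 1).choose i) / (j + 1) * ((n : ℚ) + 1)
        = ((n + 1).choose i : ℚ) * (((n + 1 - i).choose (j + 1 - i) : ℚ) * bernoulli (n - j)) := by
    intro j hj
    obtain ⟨hij, hjn⟩ := Finset.mem_Icc.mp hj
    have h1 : ((n : ℚ) + 1) * (n.choose j) = ((n + 1).choose (j + 1) : ℚ) * ((j : ℚ) + 1) := by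
      exact_mod_cast congrArg (Nat.cast (R := ℚ)) (Nat.add_one_mul_choose_eq n j)
    have h2 : (((n + 1).choose (j + 1) : ℚ)) * ((j + 1).choose i)
        = ((n + 1).choose i : ℚ) * ((n + 1 - i).choose (j + 1 - i)) := by
      exact_mod_cast congrArg (Nat.cast (R := ℚ)) (Nat.choose_mul (by omega))
    have hj1 : ((j : ℚ) + 1) ≠ 0 := by positivity
    field_simp
    linear_combination (bernoulli (n - j) * (((j + 1).choose i : ℚ))) * h1
      + (bernoulli (n - j) * ((j : ℚ) + 1)) * h2
  rw [Finset.sum_congr rfl step, ← Finset.mul_sum]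
  have reindex : ∑ j ∈ Finset.Icc i n, (((n + 1 - i).choose (j + 1 - i) : ℚ) * bernoulli (n - j))
      = ∑ s ∈ Finset.range (n + 1 - i), (((n + 1 - i).choose s : ℚ)) * bernoulli s := by
    refine Finset.sum_nbij' (fun j => n - j) (fun s => n - s) ?_ ?_ ?_ ?_ ?_
    · intro j hj; obtain ⟨hij, hjn⟩ := Finset.mem_Icc.mp hj
      simp only [Finset.mem_range]; omega
    · intro s hs; simp only [Finset.mem_range] at hs
      rw [Finset.mem_Icc]; omega
    · intro j hj; obtain ⟨hij, hjn⟩ := Finset.mem_Icc.mp hj; omega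
    · intro s hs; simp only [Finset.mem_range] at hs; omega
    · intro j hj; obtain ⟨hij, hjn⟩ := Finset.mem_Icc.mp hj
      have e1 : j + 1 - i = (n + 1 - i) - (n - j) := by omega
      have e2 : n - j ≤ n + 1 - i := by omega
      rw [e1, Nat.choose_symm e2]
  rw [reindex, sum_bernoulli]
  rcases eq_or_ne i n with h | h
  · subst h
    have : i + 1 - i = 1 := by omega
    rw [this, if_pos rfl, if_pos rfl]
    rw [Nat.choose_succ_self_right]
    push_cast
    ring
  · have h2 : n + 1 - i ≠ 1 := by omega
    rw [if_neg h2, if_neg h]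
    ring

lemma bern_eval_inv (m : ℕ) (x : ℝ) (hx : x ≠ 0) :
    x ^ m * ((Polynomial.bernoulli m).map (algebraMap ℚ ℝ)).eval (1 / x)
      = ∑ i ∈ Finset.range (m + 1), ((bernoulli i : ℚ) : ℝ) * (m.choose i) * x ^ i := by
  rw [Polynomial.bernoulli, Polynomial.map_sum, Polynomial.eval_finset_sum, Finset.mul_sum]
  refine Finset.sum_congr rfl ?_
  intro i hi
  rw [Finset.mem_range] at hi
  have him : i ≤ m := by omega
  rw [Polynomial.map_monomial, Polynomial.eval_monomial, eq_ratCast (algebraMap ℚ ℝ)]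
  have hp : x ^ (m - i) * x ^ i = x ^ m := pow_sub_mul_pow x him
  have hxm : (x : ℝ) ^ (m - i) ≠ 0 := pow_ne_zero _ hx
  rw [one_div, inv_pow]
  push_cast
  field_simp
  linear_combination (-((bernoulli i : ℝ) * (m.choose i : ℝ))) * hp

/-- For all real `x ≠ 0`,
`∑_{j=0}^n C(n,j) B_{n-j} x^{j+1} (B_{j+1}(1/x) - B_{j+1})/(j+1) = x^n B_n`. -/
theorem bernoulli_poly_inv_identity (n : ℕ) (x : ℝ) (hx : x ≠ 0) :
    ∑ j ∈ Finset.range (n + 1), (n.choose j : ℝ) * ((bernoulli (n - j) : ℚ) : ℝ) *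
        (x ^ (j + 1) / (j + 1)) *
        (((Polynomial.bernoulli (j + 1)).map (algebraMap ℚ ℝ)).eval (1 / x) -
          ((bernoulli (j + 1) : ℚ) : ℝ)) =
      x ^ n * ((bernoulli n : ℚ) : ℝ) := by
  have key : ∀ j ∈ Finset.range (n + 1),
      (n.choose j : ℝ) * ((bernoulli (n - j) : ℚ) : ℝ) * (x ^ (j + 1) / (j + 1)) *
        (((Polynomial.bernoulli (j + 1)).map (algebraMap ℚ ℝ)).eval (1 / x) -
          ((bernoulli (j + 1) : ℚ) : ℝ))
      = ∑ i ∈ Finset.range (j + 1),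
          ((n.choose j : ℝ) * ((bernoulli (n - j) : ℚ) : ℝ) * (((j + 1).choose i : ℝ))
            / ((j : ℝ) + 1)) * (((bernoulli i : ℚ) : ℝ) * x ^ i) := by
    intro j _
    have h2 : x ^ (j + 1) *
        (((Polynomial.bernoulli (j + 1)).map (algebraMap ℚ ℝ)).eval (1 / x) -
          ((bernoulli (j + 1) : ℚ) : ℝ))
        = ∑ i ∈ Finset.range (j + 1), ((bernoulli i : ℚ) : ℝ) * ((j + 1).choose i) * x ^ i := by
      rw [mul_sub, bern_eval_inv (j + 1) x hx, Finset.sum_range_succ, Nat.choose_self]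
      push_cast
      ring
    have hA : (n.choose j : ℝ) * ((bernoulli (n - j) : ℚ) : ℝ) * (x ^ (j + 1) / (j + 1)) *
        (((Polynomial.bernoulli (j + 1)).map (algebraMap ℚ ℝ)).eval (1 / x) -
          ((bernoulli (j + 1) : ℚ) : ℝ))
        = ((n.choose j : ℝ) * ((bernoulli (n - j) : ℚ) : ℝ) / ((j : ℝ) + 1)) *
          (x ^ (j + 1) *
            (((Polynomial.bernoulli (j + 1)).map (algebraMap ℚ ℝ)).eval (1 / x) -
              ((bernoulli (j + 1) : ℚ) : ℝ))) := by
      ring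
    rw [hA, h2, Finset.mul_sum]
    exact Finset.sum_congr rfl fun i _ => by ring
  rw [Finset.sum_congr rfl key]
  rw [Finset.sum_comm' (s := Finset.range (n + 1)) (t := fun j => Finset.range (j + 1))
    (t' := Finset.range (n + 1)) (s' := fun i => Finset.Icc i n)
    (by intro j i
        simp only [Finset.mem_range, Finset.mem_Icc]
        omega)]
  have inner : ∀ i ∈ Finset.range (n + 1),
      ∑ j ∈ Finset.Icc i n,
        ((n.choose j : ℝ) * ((bernoulli (n - j) : ℚ) : ℝ) * (((j + 1).choose i : ℝ))
          / ((j : ℝ) + 1)) * (((bernoulli i : ℚ) : ℝ) * x ^ i)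
      = (if i = n then 1 else 0) * (((bernoulli i : ℚ) : ℝ) * x ^ i) := by
    intro i hi
    rw [Finset.mem_range] at hi
    rw [← Finset.sum_mul]
    congr 1
    have h := aux_sum n i (by omega)
    have h' := congrArg (Rat.cast (K := ℝ)) h
    push_cast at h'
    rw [h']
    split <;> norm_num
  rw [Finset.sum_congr rfl inner]
  have : ∀ i ∈ Finset.range (n + 1),
      (if i = n then (1 : ℝ) else 0) * (((bernoulli i : ℚ) : ℝ) * x ^ i)
      = if i = n then ((bernoulli i : ℚ) : ℝ) * x ^ i else 0 := by
    intro i _; split <;> simp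
  rw [Finset.sum_congr rfl this, Finset.sum_ite_eq' (Finset.range (n + 1)) n,
    if_pos (Finset.self_mem_range_succ n)]
  ring
end

section
/- For every integer n ≥ 2, the polynomial identity ∑_{k=1}^{n-1} (1/(k(n-k))) B_k(x) B_{n-k}(x) = (2/n) ∑_{l=0}^{n-2} (1/(n-l)) C(n,l) B_{n-l} B_l(x) + (2/n) H_{n-1} B_n(x) holds. -/
open Polynomial

/-- The `m`-th harmonic number `H_m = ∑_{j=1}^m 1/j`. -/
def harmonic' (m : ℕ) : ℚ := ∑ j ∈ Finset.range m, (1 : ℚ) / (j + 1)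

/-!
Since `B_k' = k B_{k-1}`, both sides `P = lhs, rhs` satisfy `P (n+1)' = n P n + (2/n) B_n`.
So if `lhs n = rhs n`, then `lhs (n+1) - rhs (n+1)` is a constant `c`, and
`lhs (n+2) - rhs (n+2)` has derivative `(n+1) c`; its increment over `[0, 1]` is therefore
`(n+1) c`. On the other hand `B_j(1) = B_j(0)` for `j ≠ 1`, so only the terms containing `B_1`
contribute to the increments of `lhs (n+2)` and `rhs (n+2)`, and both equal `2 B_{n+1}/(n+1)`.
Hence `c = 0`.
-/

open Finset

namespace Polynomial

theorem eval_sub_eval_of_derivative_eq_C {R : Type*} [Ring R] [IsAddTorsionFree R] {p : R[X]}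
    {d : R} (h : derivative p = C d) (a b : R) : p.eval b - p.eval a = d * (b - a) := by
  have hp : p - C d * X = C ((p - C d * X).coeff 0) :=
    eq_C_of_derivative_eq_zero (by simp [h])
  rw [sub_eq_iff_eq_add] at hp
  rw [hp]
  simp [mul_sub]

end Polynomial

namespace Polynomial.BernoulliProductSum

noncomputable def lhs (n : ℕ) : ℚ[X] :=
  ∑ k ∈ Ico 1 n, C (1 / ((k : ℚ) * ((n : ℚ) - k))) * bernoulli k * bernoulli (n - k)

noncomputable def rhs (n : ℕ) : ℚ[X] :=
  C (2 / (n : ℚ)) * ∑ l ∈ range (n - 1),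
      C ((1 / ((n : ℚ) - l)) * (n.choose l : ℚ) * _root_.bernoulli (n - l)) * bernoulli l +
    C ((2 / (n : ℚ)) * harmonic' (n - 1)) * bernoulli n

theorem derivative_C_inv_mul_bernoulli_mul_bernoulli {k m : ℕ} (hk : k ≠ 0) (hm : m ≠ 0) :
    derivative (C (1 / ((k : ℚ) * m)) * bernoulli k * bernoulli m) =
      C (1 / (m : ℚ)) * bernoulli (k - 1) * bernoulli m +
        C (1 / (k : ℚ)) * bernoulli k * bernoulli (m - 1) := by
  have hk' : (k : ℚ) ≠ 0 := by exact_mod_cast hk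
  have hm' : (m : ℚ) ≠ 0 := by exact_mod_cast hm
  have hcoeff_k : C (1 / ((k : ℚ) * m)) * C (k : ℚ) = C (1 / (m : ℚ)) := by
    rw [← C_mul]; congr 1; field_simp
  have hcoeff_m : C (1 / ((k : ℚ) * m)) * C (m : ℚ) = C (1 / (k : ℚ)) := by
    rw [← C_mul]; congr 1; field_simp
  rw [derivative_mul, derivative_mul, derivative_C, derivative_bernoulli, derivative_bernoulli,
    ← C_eq_natCast, ← C_eq_natCast]
  linear_combination (bernoulli (k - 1) * bernoulli m) * hcoeff_k +
    (bernoulli k * bernoulli (m - 1)) * hcoeff_m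

theorem derivative_lhs_succ {n : ℕ} (hn : 1 ≤ n) :
    derivative (lhs (n + 1)) = C (n : ℚ) * lhs n + C (2 / (n : ℚ)) * bernoulli n := by
  set f : ℕ → ℚ[X] := fun k => C (1 / (k : ℚ)) * bernoulli k * bernoulli (n - k)
  set g : ℕ → ℚ[X] := fun k => C (1 / ((n - k : ℕ) : ℚ)) * bernoulli k * bernoulli (n - k)
  have hderiv : ∀ k ∈ Ico 1 (n + 1), derivative
      (C (1 / ((k : ℚ) * (((n + 1 : ℕ) : ℚ) - k))) * bernoulli k * bernoulli (n + 1 - k)) =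
      g (k - 1) + f k := by
    intro k hk
    obtain ⟨j, rfl⟩ := Nat.exists_eq_add_of_le' (mem_Ico.mp hk).1
    have hjn : j < n := by linarith [(mem_Ico.mp hk).2]
    rw [show ((n + 1 : ℕ) : ℚ) - ((j + 1 : ℕ) : ℚ) = ((n - j : ℕ) : ℚ) by
        push_cast [Nat.cast_sub hjn.le]; ring,
      show n + 1 - (j + 1) = n - j by omega,
      derivative_C_inv_mul_bernoulli_mul_bernoulli (by omega) (by omega)]
    simp only [f, g, Nat.add_sub_cancel, show n - j - 1 = n - (j + 1) by omega]
  have hsplit : ∀ k ∈ Ico 1 n,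
      C (n : ℚ) * (C (1 / ((k : ℚ) * ((n : ℚ) - k))) * bernoulli k * bernoulli (n - k)) =
        f k + g k := by
    intro k hk
    have hk0 : (k : ℚ) ≠ 0 := by have := (mem_Ico.mp hk).1; positivity
    have hnk : (n : ℚ) - k ≠ 0 := sub_ne_zero.mpr (by exact_mod_cast (mem_Ico.mp hk).2.ne')
    have hcoeff : C (n : ℚ) * C (1 / ((k : ℚ) * ((n : ℚ) - k))) =
        C (1 / (k : ℚ)) + C (1 / ((n - k : ℕ) : ℚ)) := by
      rw [← C_mul, ← C_add, Nat.cast_sub (mem_Ico.mp hk).2.le]; congr 1; field_simp; ring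
    linear_combination (bernoulli k * bernoulli (n - k)) * hcoeff
  have hg : ∑ k ∈ Ico 1 (n + 1), g (k - 1) = g 0 + ∑ k ∈ Ico 1 n, g k := by
    rw [← sum_Ico_add' (fun k => g (k - 1)) 0 n 1, sum_eq_sum_Ico_succ_bot hn]
    simp only [Nat.add_sub_cancel]
  have hf : ∑ k ∈ Ico 1 (n + 1), f k = ∑ k ∈ Ico 1 n, f k + f n := sum_Ico_succ_top hn f
  rw [lhs, derivative_sum, sum_congr rfl hderiv, sum_add_distrib, hg, hf, lhs, mul_sum,
    sum_congr rfl hsplit, sum_add_distrib]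
  simp only [f, g, Nat.sub_self, Nat.sub_zero, bernoulli_zero]
  have htwo : C (2 / (n : ℚ)) = C (1 / (n : ℚ)) + C (1 / (n : ℚ)) := by
    rw [← C_add]; ring_nf
  rw [htwo]
  ring

theorem derivative_rhs_succ {n : ℕ} (hn : 1 ≤ n) :
    derivative (rhs (n + 1)) = C (n : ℚ) * rhs n + C (2 / (n : ℚ)) * bernoulli n := by
  obtain ⟨m, rfl⟩ := Nat.exists_eq_add_of_le' hn
  have hm : (m : ℚ) + 1 ≠ 0 := by positivity
  have hterm : ∀ j ∈ range m,
      C (2 / ((m : ℚ) + 1 + 1)) * (C (1 / ((m : ℚ) + 1 + 1 - (j + 1)) *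
        ((m + 1 + 1).choose (j + 1) : ℚ) * _root_.bernoulli (m + 1 + 1 - (j + 1))) *
          (((j : ℚ[X]) + 1) * bernoulli j)) =
        C ((m : ℚ) + 1) * (C (2 / ((m : ℚ) + 1)) * (C (1 / ((m : ℚ) + 1 - j) *
          ((m + 1).choose j : ℚ) * _root_.bernoulli (m + 1 - j)) * bernoulli j)) := by
    intro j hj
    have hmj : (m : ℚ) + 1 - j ≠ 0 := by
      have : (j : ℚ) < m := by exact_mod_cast mem_range.mp hj
      linarith
    have hch : (((m + 1 + 1).choose (j + 1) : ℕ) : ℚ) * ((j : ℚ) + 1) =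
        ((m : ℚ) + 1 + 1) * ((m + 1).choose j : ℚ) := by
      exact_mod_cast (Nat.add_one_mul_choose_eq (m + 1) j).symm
    rw [show ((j : ℚ[X]) + 1) = C ((j : ℚ) + 1) by simp]
    simp only [← mul_assoc, ← C_mul]
    congr 2
    rw [show m + 1 + 1 - (j + 1) = m + 1 - j by omega,
      show (m : ℚ) + 1 + 1 - (j + 1) = m + 1 - j by ring]
    field_simp
    linear_combination (_root_.bernoulli (m + 1 - j)) * hch
  have hharmonic : 2 / ((m : ℚ) + 1 + 1) * harmonic' (m + 1) * ((m : ℚ) + 1 + 1) =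
      ((m : ℚ) + 1) * (2 / ((m : ℚ) + 1) * harmonic' m) + 2 / ((m : ℚ) + 1) := by
    rw [harmonic', sum_range_succ, ← harmonic']
    field_simp
  have hC : C (2 / ((m : ℚ) + 1 + 1) * harmonic' (m + 1)) * C ((m : ℚ) + 1 + 1) =
      C ((m : ℚ) + 1) * C (2 / ((m : ℚ) + 1) * harmonic' m) + C (2 / ((m : ℚ) + 1)) := by
    rw [← C_mul, ← C_mul, ← C_add, hharmonic]
  simp only [rhs, Nat.add_sub_cancel, derivative_add, derivative_mul, derivative_C, zero_mul,
    zero_add, derivative_sum, sum_range_succ', derivative_bernoulli, Nat.cast_zero, Nat.cast_add,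
    Nat.cast_one, mul_zero, add_zero, mul_sum, sum_congr rfl hterm]
  rw [← mul_sum, ← mul_sum, show ((m : ℚ[X]) + 1 + 1) = C ((m : ℚ) + 1 + 1) by simp]
  linear_combination (bernoulli (m + 1)) * hC

theorem lhs_succ_eval_one_sub_eval_zero {n : ℕ} (hn : 2 ≤ n) :
    (lhs (n + 1)).eval 1 - (lhs (n + 1)).eval 0 = 2 * _root_.bernoulli n / n := by
  have hn' : (n : ℚ) ≠ 0 := by positivity
  have hbn : bernoulli' n = _root_.bernoulli n :=
    (bernoulli_eq_bernoulli'_of_ne_one (by omega)).symm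
  simp only [lhs, eval_finsetSum, eval_mul, eval_C, bernoulli_eval_one, bernoulli_eval_zero,
    ← sum_sub_distrib]
  rw [sum_eq_add_of_mem 1 n (by simp; omega) (by simp; omega) (by omega)]
  · simp only [Nat.add_sub_cancel, Nat.add_sub_cancel_left, bernoulli'_one,
      _root_.bernoulli_one, hbn]
    push_cast
    rw [add_sub_cancel_right]
    field_simp
    ring
  · intro k hk ⟨hk1, hkn⟩
    have hk : k < n + 1 := (mem_Ico.mp hk).2
    rw [← bernoulli_eq_bernoulli'_of_ne_one hk1, ← bernoulli_eq_bernoulli'_of_ne_one (by omega),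
      sub_self]

theorem rhs_succ_eval_one_sub_eval_zero {n : ℕ} (hn : 2 ≤ n) :
    (rhs (n + 1)).eval 1 - (rhs (n + 1)).eval 0 = 2 * _root_.bernoulli n / n := by
  have hn' : (n : ℚ) ≠ 0 := by positivity
  have hsum : ∑ l ∈ range n,
      (1 / (((n + 1 : ℕ) : ℚ) - l) * ((n + 1).choose l : ℚ) * _root_.bernoulli (n + 1 - l)) *
        (bernoulli' l - _root_.bernoulli l) = (n + 1) * _root_.bernoulli n / n := by
    rw [sum_eq_single_of_mem 1 (by simp; omega)]
    · simp only [bernoulli'_one, _root_.bernoulli_one, Nat.choose_one_right, Nat.add_sub_cancel]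
      push_cast
      rw [add_sub_cancel_right]
      field_simp
      ring
    · intro l _ hl
      rw [← bernoulli_eq_bernoulli'_of_ne_one hl, sub_self, mul_zero]
  have hb : bernoulli' (n + 1) = _root_.bernoulli (n + 1) :=
    (bernoulli_eq_bernoulli'_of_ne_one (by omega)).symm
  simp only [rhs, Nat.add_sub_cancel, eval_add, eval_mul, eval_C, eval_finsetSum,
    bernoulli_eval_one, bernoulli_eval_zero, hb]
  simp only [mul_sub, sum_sub_distrib] at hsum
  rw [add_sub_add_right_eq_sub, ← mul_sub, hsum]
  push_cast
  field_simp

theorem lhs_succ_eq_rhs_succ {n : ℕ} (hn : 1 ≤ n) (h : lhs n = rhs n) :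
    lhs (n + 1) = rhs (n + 1) := by
  have hconst := eq_C_of_derivative_eq_zero (p := lhs (n + 1) - rhs (n + 1)) <| by
    rw [derivative_sub, derivative_lhs_succ hn, derivative_rhs_succ hn, h, sub_self]
  set c := (lhs (n + 1) - rhs (n + 1)).coeff 0
  have hderiv : derivative (lhs (n + 2) - rhs (n + 2)) = C (((n + 1 : ℕ) : ℚ) * c) := by
    rw [derivative_sub, derivative_lhs_succ (by omega), derivative_rhs_succ (by omega), C_mul,
      ← hconst]
    ring
  have hendpoints := eval_sub_eval_of_derivative_eq_C hderiv 0 1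
  rw [eval_sub, eval_sub, sub_sub_sub_comm, lhs_succ_eval_one_sub_eval_zero (by omega),
    rhs_succ_eval_one_sub_eval_zero (by omega), sub_self, sub_zero, mul_one, eq_comm,
    mul_eq_zero] at hendpoints
  rw [← sub_eq_zero, hconst, hendpoints.resolve_left (by positivity), map_zero]

theorem lhs_eq_rhs (n : ℕ) : lhs n = rhs n := by
  induction n with
  | zero => simp [lhs, rhs]
  | succ n ih =>
    rcases Nat.eq_zero_or_pos n with rfl | hn
    · simp [lhs, rhs, harmonic']
    · exact lhs_succ_eq_rhs_succ hn ih

end Polynomial.BernoulliProductSum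

theorem bernoulli_poly_product_sum_general (n : ℕ) :
    ∑ k ∈ Finset.Ico 1 n,
        C (1 / ((k : ℚ) * ((n : ℚ) - k))) *
          Polynomial.bernoulli k * Polynomial.bernoulli (n - k) =
      C (2 / (n : ℚ)) * ∑ l ∈ Finset.range (n - 1),
          C ((1 / ((n : ℚ) - l)) * (n.choose l : ℚ) * _root_.bernoulli (n - l)) *
            Polynomial.bernoulli l +
        C ((2 / (n : ℚ)) * harmonic' (n - 1)) * Polynomial.bernoulli n :=
  Polynomial.BernoulliProductSum.lhs_eq_rhs n

/-- For `n ≥ 2`, the polynomial identity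
`∑_{k=1}^{n-1} B_k(x)B_{n-k}(x)/(k(n-k))
  = (2/n) ∑_{l=0}^{n-2} C(n,l) B_{n-l} B_l(x)/(n-l) + (2/n) H_{n-1} B_n(x)`. -/
theorem bernoulli_poly_product_sum (n : ℕ) (hn : 2 ≤ n) :
    ∑ k ∈ Finset.Ico 1 n,
        C (1 / ((k : ℚ) * ((n : ℚ) - k))) *
          Polynomial.bernoulli k * Polynomial.bernoulli (n - k) =
      C (2 / (n : ℚ)) * ∑ l ∈ Finset.range (n - 1),
          C ((1 / ((n : ℚ) - l)) * (n.choose l : ℚ) * _root_.bernoulli (n - l)) *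
            Polynomial.bernoulli l +
        C ((2 / (n : ℚ)) * harmonic' (n - 1)) * Polynomial.bernoulli n :=
  bernoulli_poly_product_sum_general n
end

section
/- (Nielsen) For positive integers m, n with m+n ≥ 2, the polynomial identity B_m(x) B_n(x) = ∑_{r} (C(m,2r) n + C(n,2r) m) B_{2r} B_{m+n-2r}(x)/(m+n-2r) + (-1)^{m+1} B_{m+n}/C(m+n,m) holds, where the sum is over all integers r ≥ 0 with 2r ≤ max(m,n) and m+n-2r ≥ 1. -/
/-!
Both sides have the same forward difference `p(x + 1) - p(x)`. On the left it comes from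
`B_k(x + 1) = B_k(x) + k x^(k-1)`; expanding `B_n(x) = ∑ C(n,i) B_i x^(n-i)` turns it into the
right-hand side, because the odd Bernoulli numbers beyond `B_1` vanish and the two `B_1` terms
cancel the cross term `m n x^(m+n-2)`. A polynomial with zero forward difference is constant, so
it remains to compare `∫₀¹` of both sides: every `B_k` with `k ≥ 1` has mean zero, and integration
by parts gives `∫₀¹ B_m B_n = (-1)^(m+1) B_{m+n} / C(m+n,m)`.
-/

open Polynomial Finset

theorem Finset.sum_range_two_mul {M : Type*} [AddCommMonoid M] (f : ℕ → M) (K : ℕ) :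
    ∑ i ∈ range (2 * K), f i = ∑ r ∈ range K, f (2 * r) + ∑ r ∈ range K, f (2 * r + 1) := by
  induction K with
  | zero => simp
  | succ K ih =>
    rw [Nat.mul_succ, sum_range_succ, sum_range_succ, ih, sum_range_succ, sum_range_succ]
    abel

namespace Polynomial

section UnitIntervalIntegral

variable {K : Type*} [Field K]

noncomputable def unitIntervalIntegral : K[X] →ₗ[K] K :=
  lsum fun i => (i + 1 : K)⁻¹ • LinearMap.id

theorem unitIntervalIntegral_monomial (i : ℕ) (a : K) :
    unitIntervalIntegral (monomial i a) = (i + 1 : K)⁻¹ * a := by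
  simp [unitIntervalIntegral]

theorem unitIntervalIntegral_C (a : K) : unitIntervalIntegral (C a) = a := by
  simpa using unitIntervalIntegral_monomial 0 a

theorem unitIntervalIntegral_C_mul (a : K) (p : K[X]) :
    unitIntervalIntegral (C a * p) = a * unitIntervalIntegral p := by
  rw [C_mul', map_smul, smul_eq_mul]

variable [CharZero K]

theorem unitIntervalIntegral_derivative (p : K[X]) :
    unitIntervalIntegral (derivative p) = p.eval 1 - p.eval 0 := by
  induction p using Polynomial.induction_on' with
  | add p q hp hq => rw [derivative_add, map_add, hp, hq, eval_add, eval_add]; ring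
  | monomial i a =>
    cases i with
    | zero => simp
    | succ i =>
      rw [derivative_monomial, unitIntervalIntegral_monomial]
      simp [field]

theorem unitIntervalIntegral_derivative_mul_add_mul_derivative (p q : K[X]) :
    unitIntervalIntegral (derivative p * q) + unitIntervalIntegral (p * derivative q) =
      p.eval 1 * q.eval 1 - p.eval 0 * q.eval 0 := by
  rw [← map_add, ← derivative_mul, unitIntervalIntegral_derivative, eval_mul, eval_mul]

end UnitIntervalIntegral

noncomputable def forwardDiff {R : Type*} [Ring R] : R[X] →ₗ[R] R[X] :=
  taylor 1 - LinearMap.id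

theorem forwardDiff_apply {R : Type*} [Ring R] (p : R[X]) : forwardDiff p = taylor 1 p - p :=
  rfl

theorem forwardDiff_C {R : Type*} [Ring R] (a : R) : forwardDiff (C a) = 0 := by
  rw [forwardDiff_apply, taylor_C, sub_self]

theorem eq_C_of_taylor_one_eq {R : Type*} [CommRing R] [IsDomain R] [CharZero R] {p : R[X]}
    (h : taylor 1 p = p) : p = C (p.eval 0) := by
  have hnat (k : ℕ) : p.eval (k : R) = p.eval 0 := by
    induction k with
    | zero => simp
    | succ k ih => rw [Nat.cast_succ, ← taylor_eval, h, ih]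
  refine eq_of_infinite_eval_eq _ _ (Set.infinite_of_injective_forall_mem Nat.cast_injective ?_)
  simpa using hnat

theorem eq_of_forwardDiff_eq {K : Type*} [Field K] [CharZero K] {p q : K[X]}
    (hΔ : forwardDiff p = forwardDiff q) (hI : unitIntervalIntegral p = unitIntervalIntegral q) :
    p = q := by
  have hperiodic : taylor 1 (p - q) = p - q := by
    rw [← sub_eq_zero, ← forwardDiff_apply, map_sub, hΔ, sub_self]
  have hconst := eq_C_of_taylor_one_eq hperiodic
  have hzero : (p - q).eval 0 = 0 := by
    rw [← unitIntervalIntegral_C ((p - q).eval 0), ← hconst, map_sub, hI, sub_self]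
  rwa [hzero, C_0, sub_eq_zero] at hconst

theorem bernoulli_eval_one_of_ne_one {k : ℕ} (hk : k ≠ 1) :
    (bernoulli k).eval 1 = (bernoulli k).eval 0 := by
  rw [bernoulli_eval_one, bernoulli_eval_zero, bernoulli_eq_bernoulli'_of_ne_one hk]

theorem derivative_bernoulli_add_one_eq_C_mul (k : ℕ) :
    derivative (bernoulli (k + 1)) = C ((k : ℚ) + 1) * bernoulli k := by
  simp [derivative_bernoulli_add_one]

theorem unitIntervalIntegral_bernoulli {k : ℕ} (hk : k ≠ 0) :
    unitIntervalIntegral (bernoulli k) = 0 := by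
  have h := unitIntervalIntegral_derivative (bernoulli (k + 1))
  rw [derivative_bernoulli_add_one_eq_C_mul, unitIntervalIntegral_C_mul,
    bernoulli_eval_one_of_ne_one (by omega), sub_self] at h
  exact (mul_eq_zero.mp h).resolve_left (by positivity)

theorem unitIntervalIntegral_bernoulli_mul_bernoulli_by_parts (k l : ℕ) :
    (k + 1) * unitIntervalIntegral (bernoulli k * bernoulli (l + 1)) +
        (l + 1) * unitIntervalIntegral (bernoulli (k + 1) * bernoulli l) =
      (bernoulli (k + 1)).eval 1 * (bernoulli (l + 1)).eval 1 -
        (bernoulli (k + 1)).eval 0 * (bernoulli (l + 1)).eval 0 := by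
  rw [← unitIntervalIntegral_derivative_mul_add_mul_derivative,
    derivative_bernoulli_add_one_eq_C_mul, derivative_bernoulli_add_one_eq_C_mul, mul_assoc (C _),
    mul_left_comm (bernoulli (k + 1)), unitIntervalIntegral_C_mul, unitIntervalIntegral_C_mul]

theorem unitIntervalIntegral_bernoulli_one_mul {n : ℕ} (hn : n ≠ 0) :
    unitIntervalIntegral (bernoulli 1 * bernoulli n) = _root_.bernoulli (n + 1) / (n + 1) := by
  have h := unitIntervalIntegral_bernoulli_mul_bernoulli_by_parts 0 n
  rw [zero_add, bernoulli_zero, one_mul, unitIntervalIntegral_bernoulli (by omega),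
    bernoulli_eval_one_of_ne_one (k := n + 1) (by omega), bernoulli_eval_one, bernoulli'_one,
    bernoulli_eval_zero, bernoulli_eval_zero, _root_.bernoulli_one] at h
  rw [eq_div_iff (by positivity)]
  linear_combination h

theorem unitIntervalIntegral_bernoulli_mul_bernoulli {m n : ℕ} (hm : m ≠ 0) (hn : n ≠ 0) :
    unitIntervalIntegral (bernoulli m * bernoulli n) =
      (-1) ^ (m + 1) * _root_.bernoulli (m + n) / (m + n).choose m := by
  induction m, Nat.one_le_iff_ne_zero.mpr hm using Nat.le_induction generalizing n with
  | base =>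
    rw [unitIntervalIntegral_bernoulli_one_mul hn, add_comm 1 n]
    simp [Nat.choose_one_right]
  | succ m hm_pos ih =>
    -- The boundary terms vanish, so integration by parts trades `B_m B_{n+1}` for `B_{m+1} B_n`.
    have h := unitIntervalIntegral_bernoulli_mul_bernoulli_by_parts m n
    rw [bernoulli_eval_one_of_ne_one (k := m + 1) (by omega),
      bernoulli_eval_one_of_ne_one (k := n + 1) (by omega), sub_self,
      ih (by omega) (by omega)] at h
    have hchoose : ((m + (n + 1)).choose (m + 1) : ℚ) * (m + 1) =
        (m + (n + 1)).choose m * (n + 1) := by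
      have := Nat.choose_succ_right_eq (m + (n + 1)) m
      rw [show m + (n + 1) - m = n + 1 by omega] at this
      exact_mod_cast this
    have hc : ((m + (n + 1)).choose m : ℚ) ≠ 0 := by
      have := Nat.choose_pos (show m ≤ m + (n + 1) by omega)
      positivity
    have hc' : ((m + (n + 1)).choose (m + 1) : ℚ) ≠ 0 := by
      have := Nat.choose_pos (show m + 1 ≤ m + (n + 1) by omega)
      positivity
    rw [show m + 1 + n = m + (n + 1) by omega]
    field_simp at h ⊢
    refine (mul_left_inj' (mul_ne_zero hc (show (n : ℚ) + 1 ≠ 0 by positivity))).mp ?_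
    linear_combination ((m + (n + 1)).choose (m + 1) : ℚ) * h
      - (-1) ^ (m + 1) * _root_.bernoulli (m + (n + 1)) * hchoose

theorem taylor_one_bernoulli (k : ℕ) :
    taylor 1 (bernoulli k) = bernoulli k + C (k : ℚ) * X ^ (k - 1) := by
  rw [taylor_apply, C_1, add_comm X, bernoulli_comp_one_add_X, nsmul_eq_mul, C_eq_natCast]

theorem forwardDiff_C_div_mul_bernoulli (a : ℚ) {k : ℕ} (hk : k ≠ 0) :
    forwardDiff (C (a / k) * bernoulli k) = C a * X ^ (k - 1) := by
  rw [forwardDiff_apply, taylor_mul, taylor_C, taylor_one_bernoulli, mul_add, add_sub_cancel_left,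
    ← mul_assoc, ← C_mul, div_mul_cancel₀ _ (Nat.cast_ne_zero.mpr hk)]

theorem forwardDiff_bernoulli_mul_bernoulli {m n : ℕ} (hm : m ≠ 0) (hn : n ≠ 0) :
    forwardDiff (bernoulli m * bernoulli n) =
      C (m : ℚ) * X ^ (m - 1) * bernoulli n + C (n : ℚ) * X ^ (n - 1) * bernoulli m +
        C ((m : ℚ) * n) * X ^ (m + n - 2) := by
  have hX : (X : ℚ[X]) ^ (m - 1) * X ^ (n - 1) = X ^ (m + n - 2) := by
    rw [← pow_add]
    congr 1
    omega
  rw [forwardDiff_apply, taylor_mul, taylor_one_bernoulli, taylor_one_bernoulli, C_mul]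
  linear_combination C (m : ℚ) * C (n : ℚ) * hX

theorem C_mul_X_pow_mul_bernoulli {m n N : ℕ} (hm : m ≠ 0) (hN : n < N) :
    C (m : ℚ) * X ^ (m - 1) * bernoulli n =
      ∑ i ∈ range N, monomial (m + n - 1 - i) ((m : ℚ) * n.choose i * _root_.bernoulli i) := by
  rw [bernoulli, mul_sum, ← sum_subset (range_subset_range.mpr hN)]
  · refine sum_congr rfl fun i hi => ?_
    rw [C_mul_X_pow_eq_monomial, monomial_mul_monomial, mul_comm (_root_.bernoulli i), ← mul_assoc]
    congr 2
    have := mem_range.mp hi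
    omega
  · intro i _ hi
    rw [mem_range, not_lt] at hi
    simp [Nat.choose_eq_zero_of_lt hi]

theorem forwardDiff_bernoulli_mul_bernoulli_eq_sum {m n : ℕ} (hm : m ≠ 0) (hn : n ≠ 0) :
    forwardDiff (bernoulli m * bernoulli n) =
      ∑ r ∈ (range (m + n)).filter (fun r => 2 * r ≤ max m n ∧ 1 ≤ m + n - 2 * r),
        C (((m.choose (2 * r) : ℚ) * n + (n.choose (2 * r) : ℚ) * m) * _root_.bernoulli (2 * r)) *
          X ^ (m + n - 1 - 2 * r) := by
  set K := max m n / 2 + 1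
  set f : ℕ → ℚ[X] := fun i =>
    monomial (m + n - 1 - i) (((m.choose i : ℚ) * n + (n.choose i : ℚ) * m) * _root_.bernoulli i)
  have hrange :
      (range (m + n)).filter (fun r => 2 * r ≤ max m n ∧ 1 ≤ m + n - 2 * r) = range K := by
    ext r
    simp only [mem_filter, mem_range]
    omega
  have hhalves : C (m : ℚ) * X ^ (m - 1) * bernoulli n + C (n : ℚ) * X ^ (n - 1) * bernoulli m =
      ∑ i ∈ range (2 * K), f i := by
    rw [C_mul_X_pow_mul_bernoulli hm (N := 2 * K) (by omega),
      C_mul_X_pow_mul_bernoulli hn (N := 2 * K) (by omega), ← sum_add_distrib]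
    refine sum_congr rfl fun i _ => ?_
    rw [add_comm n m, ← map_add]
    congr 1
    ring
  have hodd : ∑ r ∈ range K, f (2 * r + 1) = -(C ((m : ℚ) * n) * X ^ (m + n - 2)) := by
    rw [sum_eq_single_of_mem 0 (by simp [K])]
    · rw [C_mul_X_pow_eq_monomial, ← monomial_neg]
      simp only [f, mul_zero, zero_add, _root_.bernoulli_one, Nat.choose_one_right]
      congr 1
      ring
    · intro r _ hr
      simp [f, bernoulli_eq_zero_of_odd (odd_two_mul_add_one r) (by omega)]
  rw [forwardDiff_bernoulli_mul_bernoulli hm hn, hhalves, sum_range_two_mul, hodd, hrange,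
    neg_add_cancel_right]
  simp only [f, C_mul_X_pow_eq_monomial]

end Polynomial

theorem nielsen_bernoulli_product_general (m n : ℕ) (hm : 1 ≤ m) (hn : 1 ≤ n) :
    Polynomial.bernoulli m * Polynomial.bernoulli n =
      ∑ r ∈ (Finset.range (m + n)).filter (fun r => 2 * r ≤ max m n ∧ 1 ≤ m + n - 2 * r),
          C (((m.choose (2 * r) : ℚ) * n + (n.choose (2 * r) : ℚ) * m) *
              _root_.bernoulli (2 * r) / ((m : ℚ) + n - 2 * r)) *
            Polynomial.bernoulli (m + n - 2 * r) +
        C ((-1 : ℚ) ^ (m + 1) * _root_.bernoulli (m + n) / ((m + n).choose m : ℚ)) := by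
  have hm₀ : m ≠ 0 := Nat.one_le_iff_ne_zero.mp hm
  have hn₀ : n ≠ 0 := Nat.one_le_iff_ne_zero.mp hn
  refine eq_of_forwardDiff_eq ?_ ?_
  · rw [forwardDiff_bernoulli_mul_bernoulli_eq_sum hm₀ hn₀, map_add, map_sum, forwardDiff_C,
      add_zero]
    refine sum_congr rfl fun r hr => ?_
    have hdeg : 2 * r < m + n := by
      have := (mem_filter.mp hr).2.2
      omega
    have hcast : ((m + n - 2 * r : ℕ) : ℚ) = m + n - 2 * r := by
      rw [Nat.cast_sub hdeg.le]
      push_cast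
      ring
    rw [← hcast, forwardDiff_C_div_mul_bernoulli _ (by omega),
      show m + n - 2 * r - 1 = m + n - 1 - 2 * r by omega]
  · rw [map_add, map_sum, unitIntervalIntegral_C,
      unitIntervalIntegral_bernoulli_mul_bernoulli hm₀ hn₀, right_eq_add]
    refine sum_eq_zero fun r hr => ?_
    have := (mem_filter.mp hr).2.2
    rw [unitIntervalIntegral_C_mul, unitIntervalIntegral_bernoulli (by omega), mul_zero]

/-- Nielsen's formula: for positive integers `m, n` with `m + n ≥ 2`,
`B_m(x)B_n(x) = ∑_r (C(m,2r) n + C(n,2r) m) B_{2r} B_{m+n-2r}(x)/(m+n-2r)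
  + (-1)^{m+1} B_{m+n}/C(m+n,m)`,
where the sum is over `r ≥ 0` with `2r ≤ max m n` and `m+n-2r ≥ 1`. -/
theorem nielsen_bernoulli_product (m n : ℕ) (hm : 1 ≤ m) (hn : 1 ≤ n) (hmn : 2 ≤ m + n) :
    Polynomial.bernoulli m * Polynomial.bernoulli n =
      ∑ r ∈ (Finset.range (m + n)).filter (fun r => 2 * r ≤ max m n ∧ 1 ≤ m + n - 2 * r),
          C (((m.choose (2 * r) : ℚ) * n + (n.choose (2 * r) : ℚ) * m) *
              _root_.bernoulli (2 * r) / ((m : ℚ) + n - 2 * r)) *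
            Polynomial.bernoulli (m + n - 2 * r) +
        C ((-1 : ℚ) ^ (m + 1) * _root_.bernoulli (m + n) / ((m + n).choose m : ℚ)) :=
  nielsen_bernoulli_product_general m n hm hn
end

section
/- (Nielsen) For positive integers m, n, the polynomial identity E_m(x) E_n(x) = −2 ∑_{r=1}^{m} C(m,r) E_r B_{m+n-r+1}(x)/(m+n-r+1) − 2 ∑_{s=1}^{n} C(n,s) E_s B_{m+n-s+1}(x)/(m+n-s+1) + 2(−1)^{n+1} (m! n!/(m+n+1)!) E_{m+n+1} holds. -/
noncomputable def eulerPoly : ℕ → Polynomial ℚ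
  | n => Polynomial.X ^ n - (1 / 2 : ℚ) • ∑ k : Fin n, (n.choose k : ℚ) • eulerPoly k
  decreasing_by exact k.isLt

open Polynomial

lemma eulerPoly_def (n : ℕ) : eulerPoly n =
    X ^ n - (1/2 : ℚ) • ∑ k ∈ Finset.range n, (n.choose k : ℚ) • eulerPoly k := by
  rw [eulerPoly, Fin.sum_univ_eq_sum_range (fun k => (n.choose k : ℚ) • eulerPoly k) n]

lemma eulerPoly_zero : eulerPoly 0 = 1 := by
  rw [eulerPoly_def]; simp

lemma eulerPoly_eval_one_add_eval_zero (n : ℕ) :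
    (eulerPoly n).eval 1 + (eulerPoly n).eval 0 = if n = 0 then 2 else 0 := by
  induction n using Nat.strong_induction_on with
  | _ n ih =>
    rw [eulerPoly_def]
    simp only [eval_sub, eval_pow, eval_X, eval_smul, eval_finset_sum, smul_eq_mul]
    rcases Nat.eq_zero_or_pos n with rfl | hn
    · norm_num
    · have h1 : ∑ k ∈ Finset.range n, (n.choose k : ℚ) * (eulerPoly k).eval 1
          + ∑ k ∈ Finset.range n, (n.choose k : ℚ) * (eulerPoly k).eval 0
          = ∑ k ∈ Finset.range n, (n.choose k : ℚ) *
              ((eulerPoly k).eval 1 + (eulerPoly k).eval 0) := by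
        rw [← Finset.sum_add_distrib]; apply Finset.sum_congr rfl; intros; ring
      have h2 : ∑ k ∈ Finset.range n, (n.choose k : ℚ) *
          ((eulerPoly k).eval 1 + (eulerPoly k).eval 0) = 2 := by
        rw [Finset.sum_eq_single 0]
        · rw [ih 0 hn]; simp
        · intro k hk hk0; rw [ih k (Finset.mem_range.1 hk)]; simp [hk0]
        · intro h; exact absurd (Finset.mem_range.2 hn) h
      have h3 : (0 : ℚ) ^ n = 0 := by
        rw [zero_pow]; omega
      have : ¬ n = 0 := by omega
      simp only [this, if_false, one_pow, h3]
      field_simp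
      linarith [h1, h2]

lemma derivative_eulerPoly (n : ℕ) :
    derivative (eulerPoly (n+1)) = C ((n : ℚ)+1) * eulerPoly n := by
  induction n using Nat.strong_induction_on with
  | _ n ih =>
    rw [eulerPoly_def (n+1), derivative_sub, derivative_pow, derivative_X, derivative_smul,
      derivative_sum]
    have hsum : ∑ k ∈ Finset.range (n+1), derivative ((((n+1).choose k : ℚ)) • eulerPoly k)
        = C ((n:ℚ)+1) * ∑ j ∈ Finset.range n, ((n.choose j : ℚ)) • eulerPoly j := by
      rw [Finset.sum_range_succ' (fun k => derivative ((((n+1).choose k : ℚ)) • eulerPoly k)) n]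
      have h0 : derivative ((((n+1).choose 0 : ℚ)) • eulerPoly 0) = 0 := by
        simp [eulerPoly_zero]
      rw [h0, add_zero, Finset.mul_sum]
      apply Finset.sum_congr rfl
      intro j hj
      rw [derivative_smul, ih j (Finset.mem_range.1 hj)]
      rw [smul_eq_C_mul, smul_eq_C_mul, ← mul_assoc, ← mul_assoc, ← C_mul, ← C_mul]
      congr 1
      apply Polynomial.C_inj.mpr
      have hnat : (n+1) * n.choose j = (n+1).choose (j+1) * (j+1) := Nat.add_one_mul_choose_eq n j
      push_cast
      exact_mod_cast hnat.symm
    rw [hsum, eulerPoly_def n]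
    simp only [smul_eq_C_mul]
    push_cast
    ring

lemma eq_C_eval_zero_of_derivative_eq_zero {p : ℚ[X]} (h : derivative p = 0) :
    p = C (p.eval 0) := by
  have := Polynomial.eq_C_of_derivative_eq_zero h
  rwa [← coeff_zero_eq_eval_zero]

lemma eulerPoly_comp_add_one (n : ℕ) :
    (eulerPoly n).comp (X + 1) + eulerPoly n = C (2 : ℚ) * X ^ n := by
  induction n with
  | zero => norm_num [eulerPoly_zero, map_ofNat]
  | succ n ih =>
    set G : ℚ[X] := (eulerPoly (n+1)).comp (X + 1) + eulerPoly (n+1) - C (2:ℚ) * X ^ (n+1)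
      with hG
    have hd : derivative G = 0 := by
      have hdc : derivative ((eulerPoly (n+1)).comp (X+1))
          = C ((n:ℚ)+1) * (eulerPoly n).comp (X+1) := by
        rw [derivative_comp, derivative_eulerPoly]
        simp [mul_comp]
      rw [hG, derivative_sub, derivative_add, hdc, derivative_eulerPoly,
        derivative_mul, derivative_C, derivative_pow, derivative_X]
      simp only [Nat.add_sub_cancel, Nat.cast_add, Nat.cast_one]
      linear_combination (C ((n:ℚ)+1)) * ih
    have hGC := eq_C_eval_zero_of_derivative_eq_zero hd
    have hG0 : G.eval 0 = 0 := by
      rw [hG]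
      simp only [eval_sub, eval_add, eval_comp, eval_X, eval_one, eval_mul, eval_C, eval_pow]
      have h1 := eulerPoly_eval_one_add_eval_zero (n+1)
      rw [if_neg (Nat.succ_ne_zero n)] at h1
      rw [zero_add] at *
      rw [h1]
      ring
    rw [hG0, map_zero, hG] at hGC
    linear_combination hGC

lemma eulerPoly_eq_sum (n : ℕ) :
    eulerPoly n = ∑ s ∈ Finset.range (n+1),
      C ((n.choose s : ℚ) * (eulerPoly s).eval 0) * X ^ (n - s) := by
  induction n with
  | zero => simp [eulerPoly_zero]
  | succ n ih =>
    set G : ℚ[X] := eulerPoly (n+1) - ∑ s ∈ Finset.range (n+2),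
      C (((n+1).choose s : ℚ) * (eulerPoly s).eval 0) * X ^ (n+1 - s) with hG
    have hd : derivative G = 0 := by
      rw [hG, derivative_sub, derivative_eulerPoly, derivative_sum]
      have hterm : ∀ s ∈ Finset.range (n+2),
          derivative (C (((n+1).choose s : ℚ) * (eulerPoly s).eval 0) * X ^ (n+1 - s))
          = if s ≤ n then C ((n:ℚ)+1) * (C ((n.choose s : ℚ) * (eulerPoly s).eval 0) * X ^ (n - s))
            else 0 := by
        intro s hs
        rw [derivative_C_mul, derivative_X_pow]
        rcases Nat.lt_or_ge s (n+1) with h | h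
        · rw [if_pos (by omega)]
          have e1 : (n + 1 - s : ℕ) = (n - s) + 1 := by omega
          have e2 : (n + 1 - s - 1 : ℕ) = n - s := by omega
          rw [e2, ← mul_assoc, ← mul_assoc, ← C_mul, ← C_mul]
          congr 1
          apply C_inj.mpr
          have hnat : (n+1).choose s * (n+1-s) = (n+1) * n.choose s := by
            rw [mul_comm (n+1) (n.choose s)]
            exact (Nat.choose_mul_succ_eq n s).symm
          have hq := congrArg (fun x : ℕ => (x:ℚ)) hnat
          have hle : s ≤ n + 1 := by omega
          push_cast [Nat.cast_sub hle] at hq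
          push_cast [Nat.cast_sub hle]
          linear_combination (eval 0 (eulerPoly s)) * hq
        · have hs2 : s = n + 1 := by simp only [Finset.mem_range] at hs; omega
          rw [if_neg (by omega), hs2]
          simp
      rw [Finset.sum_congr rfl hterm, Finset.sum_ite, Finset.sum_const_zero, add_zero]
      have hfilter : Finset.filter (fun s => s ≤ n) (Finset.range (n+2)) = Finset.range (n+1) := by
        ext s; simp [Nat.lt_succ_iff]; omega
      rw [hfilter, ← Finset.mul_sum, ← ih, sub_self]
    have hGC := eq_C_eval_zero_of_derivative_eq_zero hd
    have hG0 : G.eval 0 = 0 := by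
      rw [hG]
      simp only [eval_sub, eval_finset_sum, eval_mul, eval_C, eval_pow, eval_X]
      have : ∀ s ∈ Finset.range (n+2),
          ((n+1).choose s : ℚ) * (eulerPoly s).eval 0 * (0:ℚ) ^ (n+1-s)
          = if s = n+1 then (eulerPoly (n+1)).eval 0 else 0 := by
        intro s hs
        rcases eq_or_ne s (n+1) with rfl | hne
        · simp
        · rw [if_neg hne, zero_pow (by rw [Finset.mem_range] at hs; omega), mul_zero]
      rw [Finset.sum_congr rfl this, Finset.sum_ite_eq' (Finset.range (n+2)) (n+1)]
      simp
    rw [hG0, map_zero, hG] at hGC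
    linear_combination hGC

lemma eq_C_eval_zero_of_comp_add_one {p : ℚ[X]} (h : p.comp (X + 1) = p) :
    p = C (p.eval 0) := by
  have heval : ∀ x : ℚ, p.eval (x + 1) = p.eval x := by
    intro x
    conv_rhs => rw [← h]
    simp [eval_comp]
  have hnat : ∀ k : ℕ, p.eval (k : ℚ) = p.eval 0 := by
    intro k
    induction k with
    | zero => norm_num
    | succ k ihk => push_cast; rw [heval, ihk]
  have hzero : p - C (p.eval 0) = 0 := by
    apply Polynomial.eq_zero_of_infinite_isRoot
    apply Set.Infinite.mono (s := Set.range (fun k : ℕ => (k : ℚ)))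
    · rintro x ⟨k, rfl⟩
      simp [IsRoot, hnat k]
    · exact Set.infinite_range_of_injective Nat.cast_injective
  linear_combination hzero

lemma bernoulli_comp_add_one (k : ℕ) :
    (Polynomial.bernoulli k).comp (X + 1)
      = Polynomial.bernoulli k + C (k : ℚ) * X ^ (k - 1) := by
  apply Polynomial.funext
  intro x
  rw [eval_comp]
  simp only [eval_add, eval_mul, eval_C, eval_pow, eval_X, eval_one]
  rw [add_comm x 1, Polynomial.bernoulli_eval_one_add]

noncomputable def Pint (p : ℚ[X]) : ℚ[X] := p.sum fun k a => C (a / (k+1)) * X ^ (k+1)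

lemma derivative_Pint (p : ℚ[X]) : derivative (Pint p) = p := by
  rw [Pint, Polynomial.sum, map_sum]
  conv_rhs => rw [← Polynomial.sum_C_mul_X_pow_eq p, Polynomial.sum]
  apply Finset.sum_congr rfl
  intro k hk
  rw [derivative_C_mul, derivative_X_pow]
  rw [Nat.add_sub_cancel, ← mul_assoc, ← C_mul]
  congr 2
  push_cast
  field_simp

lemma Pint_eval_zero (p : ℚ[X]) : (Pint p).eval 0 = 0 := by
  rw [Pint, Polynomial.sum, eval_finset_sum]
  apply Finset.sum_eq_zero
  intro k hk
  simp [zero_pow (Nat.succ_ne_zero k)]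

noncomputable def Jint (p : ℚ[X]) : ℚ := (Pint p).eval 1

lemma Jint_spec {p r : ℚ[X]} (h : derivative r = p) : Jint p = r.eval 1 - r.eval 0 := by
  have hd : derivative (Pint p - r) = 0 := by
    rw [derivative_sub, derivative_Pint, h, sub_self]
  have := eq_C_eval_zero_of_derivative_eq_zero hd
  have h0 : (Pint p - r).eval 0 = -(r.eval 0) := by
    simp [Pint_eval_zero]
  rw [h0] at this
  have h1 := congrArg (fun q : ℚ[X] => q.eval 1) this
  simp only [eval_sub, eval_C, eval_neg] at h1
  rw [Jint]
  linarith

lemma Jint_add (p q : ℚ[X]) : Jint (p + q) = Jint p + Jint q := by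
  have : Jint (p + q) = (Pint p + Pint q).eval 1 - (Pint p + Pint q).eval 0 := by
    apply Jint_spec
    rw [derivative_add, derivative_Pint, derivative_Pint]
  rw [this]
  simp [Jint, Pint_eval_zero]

lemma Jint_C_mul (a : ℚ) (p : ℚ[X]) : Jint (C a * p) = a * Jint p := by
  have : Jint (C a * p) = (C a * Pint p).eval 1 - (C a * Pint p).eval 0 := by
    apply Jint_spec
    rw [derivative_C_mul, derivative_Pint]
  rw [this]
  simp [Jint, Pint_eval_zero]

lemma Jint_sum {α : Type*} (s : Finset α) (f : α → ℚ[X]) :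
    Jint (∑ i ∈ s, f i) = ∑ i ∈ s, Jint (f i) := by
  induction s using Finset.cons_induction with
  | empty => simp [Jint, Pint, Polynomial.sum]
  | cons a s ha ih => rw [Finset.sum_cons, Finset.sum_cons, Jint_add, ih]

lemma Jint_C (c : ℚ) : Jint (C c) = c := by
  have : Jint (C c) = (C c * X).eval 1 - (C c * X).eval 0 := by
    apply Jint_spec
    simp
  rw [this]; simp

lemma Jint_bernoulli (k : ℕ) (hk : k ≠ 0) : Jint (Polynomial.bernoulli k) = 0 := by
  have : Jint (Polynomial.bernoulli k)
      = (C (1/((k:ℚ)+1)) * Polynomial.bernoulli (k+1)).eval 1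
        - (C (1/((k:ℚ)+1)) * Polynomial.bernoulli (k+1)).eval 0 := by
    apply Jint_spec
    rw [derivative_C_mul, Polynomial.derivative_bernoulli_add_one, ← mul_assoc,
      show ((k : ℚ[X]) + 1) = C ((k:ℚ)+1) by rw [map_add, C_1, C_eq_natCast], ← C_mul,
      one_div, inv_mul_cancel₀ (show ((k:ℚ)+1) ≠ 0 by positivity), C_1, one_mul]
  rw [this]
  simp only [eval_mul, eval_C, Polynomial.bernoulli_eval_one, Polynomial.bernoulli_eval_zero]
  rw [← bernoulli_eq_bernoulli'_of_ne_one (n := k+1) (by omega)]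
  ring

lemma eulerPoly_eval_one (n : ℕ) (hn : n ≠ 0) :
    (eulerPoly n).eval 1 = -(eulerPoly n).eval 0 := by
  have := eulerPoly_eval_one_add_eval_zero n
  rw [if_neg hn] at this
  linarith

lemma Jint_eulerPoly (a : ℕ) :
    Jint (eulerPoly a) = -2 * (eulerPoly (a+1)).eval 0 / ((a:ℚ)+1) := by
  have : Jint (eulerPoly a)
      = (C (1/((a:ℚ)+1)) * eulerPoly (a+1)).eval 1
        - (C (1/((a:ℚ)+1)) * eulerPoly (a+1)).eval 0 := by
    apply Jint_spec
    rw [derivative_C_mul, derivative_eulerPoly, ← mul_assoc, ← C_mul,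
      one_div, inv_mul_cancel₀ (show ((a:ℚ)+1) ≠ 0 by positivity), C_1, one_mul]
  rw [this]
  simp only [eval_mul, eval_C]
  rw [eulerPoly_eval_one (a+1) (Nat.succ_ne_zero a)]
  field_simp
  ring

lemma Jint_euler_parts (a b : ℕ) (ha : a ≠ 0) :
    Jint (eulerPoly a * eulerPoly (b+1))
      = -(((b:ℚ)+1)/((a:ℚ)+1)) * Jint (eulerPoly (a+1) * eulerPoly b) := by
  have key : Jint (eulerPoly a * eulerPoly (b+1)
      + C (((b:ℚ)+1)/((a:ℚ)+1)) * (eulerPoly (a+1) * eulerPoly b)) = 0 := by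
    have hspec : Jint (eulerPoly a * eulerPoly (b+1)
        + C (((b:ℚ)+1)/((a:ℚ)+1)) * (eulerPoly (a+1) * eulerPoly b))
        = (C (1/((a:ℚ)+1)) * (eulerPoly (a+1) * eulerPoly (b+1))).eval 1
          - (C (1/((a:ℚ)+1)) * (eulerPoly (a+1) * eulerPoly (b+1))).eval 0 := by
      apply Jint_spec
      rw [derivative_C_mul, derivative_mul, derivative_eulerPoly, derivative_eulerPoly]
      have hane : ((a:ℚ)+1) ≠ 0 := by positivity
      rw [mul_add]
      congr 1
      · rw [← mul_assoc, ← mul_assoc, ← C_mul, one_div, inv_mul_cancel₀ hane, C_1, one_mul]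
      · rw [show ((b:ℚ)+1)/((a:ℚ)+1) = (1/((a:ℚ)+1)) * ((b:ℚ)+1) by ring, C_mul]
        ring
    rw [hspec]
    simp only [eval_mul, eval_C]
    rw [eulerPoly_eval_one (a+1) (Nat.succ_ne_zero a), eulerPoly_eval_one (b+1) (Nat.succ_ne_zero b)]
    ring
  rw [Jint_add, Jint_C_mul] at key
  linarith

lemma Jint_euler_mul (b : ℕ) : ∀ a : ℕ, 1 ≤ a →
    Jint (eulerPoly a * eulerPoly b)
      = 2 * (-1:ℚ)^(b+1) * ((a.factorial : ℚ) * b.factorial / ((a+b+1).factorial : ℚ))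
        * (eulerPoly (a+b+1)).eval 0 := by
  induction b with
  | zero =>
    intro a ha
    rw [eulerPoly_zero, mul_one, Jint_eulerPoly]
    rw [show a + 0 + 1 = a + 1 from rfl, Nat.factorial_succ]
    have h1 : ((a.factorial : ℚ)) ≠ 0 := by positivity
    have h2 : ((a:ℚ)+1) ≠ 0 := by positivity
    push_cast
    field_simp
    ring
  | succ b ihb =>
    intro a ha
    rw [Jint_euler_parts a b (by omega), ihb (a+1) (by omega)]
    have e1 : a + 1 + b + 1 = a + (b+1) + 1 := by omega
    rw [e1]
    rw [Nat.factorial_succ a, Nat.factorial_succ b]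
    have h1 : ((a.factorial : ℚ)) ≠ 0 := by positivity
    have h2 : ((b.factorial : ℚ)) ≠ 0 := by positivity
    have h3 : (((a + (b+1) + 1).factorial : ℚ)) ≠ 0 := by positivity
    have h4 : ((a:ℚ)+1) ≠ 0 := by positivity
    push_cast
    field_simp
    ring

lemma range_succ_eq_insert_Icc (M : ℕ) : Finset.range (M+1) = insert 0 (Finset.Icc 1 M) := by
  ext x; simp [Finset.mem_range, Finset.mem_Icc, Nat.lt_succ_iff]; omega

lemma mul_pow_eulerPoly (M N : ℕ) :
    C (2:ℚ) * X ^ N * eulerPoly M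
      = C (2:ℚ) * X ^ (M + N) +
        C (2:ℚ) * ∑ r ∈ Finset.Icc 1 M,
          C ((M.choose r : ℚ) * (eulerPoly r).eval 0) * X ^ (M + N - r) := by
  conv_lhs => rw [eulerPoly_eq_sum M]
  rw [Finset.mul_sum]
  have hcong : ∀ r ∈ Finset.range (M+1),
      C (2:ℚ) * X ^ N * (C ((M.choose r : ℚ) * (eulerPoly r).eval 0) * X ^ (M - r))
      = C (2:ℚ) * (C ((M.choose r : ℚ) * (eulerPoly r).eval 0) * X ^ (M + N - r)) := by
    intro r hr
    have hr' : r ≤ M := by rw [Finset.mem_range, Nat.lt_succ_iff] at hr; exact hr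
    have he : M + N - r = N + (M - r) := by omega
    rw [he, pow_add]
    ring
  rw [Finset.sum_congr rfl hcong, range_succ_eq_insert_Icc,
    Finset.sum_insert (by simp)]
  rw [Finset.mul_sum]
  congr 1
  simp [eulerPoly_zero]

lemma comp_sum_bernoulli (M N : ℕ) :
    (∑ r ∈ Finset.Icc 1 M,
        C ((M.choose r : ℚ) * (eulerPoly r).eval 0 / ((M : ℚ) + N - r + 1)) *
          Polynomial.bernoulli (M + N - r + 1)).comp (X + 1)
      = (∑ r ∈ Finset.Icc 1 M,
          C ((M.choose r : ℚ) * (eulerPoly r).eval 0 / ((M : ℚ) + N - r + 1)) *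
            Polynomial.bernoulli (M + N - r + 1))
        + ∑ r ∈ Finset.Icc 1 M,
            C ((M.choose r : ℚ) * (eulerPoly r).eval 0) * X ^ (M + N - r) := by
  rw [Polynomial.sum_comp, ← Finset.sum_add_distrib]
  apply Finset.sum_congr rfl
  intro r hr
  rw [Finset.mem_Icc] at hr
  have hrM : r ≤ M := hr.2
  rw [mul_comp, C_comp, bernoulli_comp_add_one]
  rw [mul_add]
  congr 1
  have he : M + N - r + 1 - 1 = M + N - r := by omega
  rw [he, ← mul_assoc, ← C_mul]
  congr 2
  have hcast : ((M + N - r + 1 : ℕ) : ℚ) = (M : ℚ) + N - r + 1 := by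
    push_cast [Nat.cast_sub (by omega : r ≤ M + N)]
    ring
  rw [hcast]
  have hne : (M : ℚ) + N - r + 1 ≠ 0 := by
    have h1 : (r : ℚ) ≤ (M : ℚ) := by exact_mod_cast hrM
    have h2 : (0 : ℚ) ≤ (N : ℚ) := by positivity
    intro h; nlinarith
  field_simp

/-- Nielsen's formula: for positive integers `m, n`,
`E_m(x)E_n(x) = −2∑_{r=1}^m C(m,r) E_r B_{m+n-r+1}(x)/(m+n-r+1)
  − 2∑_{s=1}^n C(n,s) E_s B_{m+n-s+1}(x)/(m+n-s+1)
  + 2(−1)^{n+1} m! n!/(m+n+1)! ⬝ E_{m+n+1}`. -/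
theorem nielsen_euler_product (m n : ℕ) (hm : 1 ≤ m) (hn : 1 ≤ n) :
    eulerPoly m * eulerPoly n =
      -(C (2 : ℚ) * ∑ r ∈ Finset.Icc 1 m,
          C ((m.choose r : ℚ) * (eulerPoly r).eval 0 / ((m : ℚ) + n - r + 1)) *
            Polynomial.bernoulli (m + n - r + 1)) -
        C (2 : ℚ) * ∑ s ∈ Finset.Icc 1 n,
          C ((n.choose s : ℚ) * (eulerPoly s).eval 0 / ((m : ℚ) + n - s + 1)) *
            Polynomial.bernoulli (m + n - s + 1) +
        C (2 * (-1 : ℚ) ^ (n + 1) *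
            ((m.factorial : ℚ) * n.factorial / ((m + n + 1).factorial : ℚ)) *
            (eulerPoly (m + n + 1)).eval 0) := by
  set S₁ : ℚ[X] := ∑ r ∈ Finset.Icc 1 m,
      C ((m.choose r : ℚ) * (eulerPoly r).eval 0 / ((m : ℚ) + n - r + 1)) *
        Polynomial.bernoulli (m + n - r + 1) with hS₁
  set S₂ : ℚ[X] := ∑ s ∈ Finset.Icc 1 n,
      C ((n.choose s : ℚ) * (eulerPoly s).eval 0 / ((m : ℚ) + n - s + 1)) *
        Polynomial.bernoulli (m + n - s + 1) with hS₂
  set P : ℚ[X] := eulerPoly m * eulerPoly n + C 2 * S₁ + C 2 * S₂ with hP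
  -- rewrite S₂ in the symmetric (n, m) form
  have hS₂' : S₂ = ∑ s ∈ Finset.Icc 1 n,
      C ((n.choose s : ℚ) * (eulerPoly s).eval 0 / ((n : ℚ) + m - s + 1)) *
        Polynomial.bernoulli (n + m - s + 1) := by
    rw [hS₂]
    apply Finset.sum_congr rfl
    intro s hs
    rw [Nat.add_comm m n, add_comm (m : ℚ) (n : ℚ)]
  have hT₁comp := comp_sum_bernoulli m n
  have hT₂comp := comp_sum_bernoulli n m
  rw [← hS₁] at hT₁comp
  rw [← hS₂'] at hT₂comp
  have h2 : C (2:ℚ) = (2 : ℚ[X]) := map_ofNat C 2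
  have hper : P.comp (X + 1) = P := by
    have hm1 : (eulerPoly m).comp (X+1) = C (2:ℚ) * X^m - eulerPoly m := by
      linear_combination eulerPoly_comp_add_one m
    have hn1 : (eulerPoly n).comp (X+1) = C (2:ℚ) * X^n - eulerPoly n := by
      linear_combination eulerPoly_comp_add_one n
    rw [hP]
    simp only [add_comp, mul_comp, C_comp]
    rw [hm1, hn1, hT₁comp, hT₂comp]
    have hA := mul_pow_eulerPoly m n
    have hB := mul_pow_eulerPoly n m
    rw [h2] at *
    linear_combination (-1 : ℚ[X]) * hA - hB
  have hPconst : P = C (P.eval 0) := eq_C_eval_zero_of_comp_add_one hper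
  have hJ1 : Jint S₁ = 0 := by
    rw [hS₁, Jint_sum]
    apply Finset.sum_eq_zero
    intro r hr
    rw [Jint_C_mul, Jint_bernoulli (m+n-r+1) (by omega), mul_zero]
  have hJ2 : Jint S₂ = 0 := by
    rw [hS₂, Jint_sum]
    apply Finset.sum_eq_zero
    intro s hs
    rw [Jint_C_mul, Jint_bernoulli (m+n-s+1) (by omega), mul_zero]
  have hJP : Jint P = 2 * (-1 : ℚ) ^ (n + 1) *
      ((m.factorial : ℚ) * n.factorial / ((m + n + 1).factorial : ℚ)) *
      (eulerPoly (m + n + 1)).eval 0 := by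
    rw [hP, Jint_add, Jint_add, Jint_C_mul, Jint_C_mul, hJ1, hJ2,
      Jint_euler_mul n m hm]
    ring
  have hJP' : Jint P = P.eval 0 := by
    conv_lhs => rw [hPconst]
    exact Jint_C _
  have hfinal : P = C (2 * (-1 : ℚ) ^ (n + 1) *
      ((m.factorial : ℚ) * n.factorial / ((m + n + 1).factorial : ℚ)) *
      (eulerPoly (m + n + 1)).eval 0) := by
    rw [hPconst, ← hJP', hJP]
  rw [hP] at hfinal
  linear_combination hfinal
end

section
/- For λ ≠ 0, every n ≥ 0, and every polynomial p with deg p = n written as p(x) = ∑_{k=0}^n a_k β_{k,λ}(x), the constant coefficient satisfies a_0 = ∫_0^1 ∑_{i=0}^{n} b_i λ^i B_i(u/λ) du, where p(x) = ∑_{i=0}^{n} b_i x^i and B_i is the i-th Bernoulli polynomial. -/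
open Polynomial

/-! Let `S` be the linear map sending `xⁱ` to `λⁱ⁺¹ B_{i+1}(x/λ)/(i+1)`. As
`B_{i+1}' = (i+1) Bᵢ`, the derivative of `S q` is `∑ qᵢ λⁱ Bᵢ(x/λ)`, so the functional
`q ↦ ∫₀¹ ∑ qᵢ λⁱ Bᵢ(u/λ) du` is `S q (1) - S q (0)`. Since `B_{i+1}(y+1) - B_{i+1}(y) = (i+1) yⁱ`,
`S q` solves the difference equation `Q(x+λ) - Q(x) = λ q(x)`, and any other solution differs from
it by a `λ`-periodic, hence constant, polynomial. For `q = (x)_{m,λ}` the solution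
`(x)_{m+1,λ}/(m+1)` shows that the functional takes the value `(1)_{m+1,λ}/(m+1)`, i.e. it maps
`e_λ^x(t)` to `(e_λ(t) - 1)/t`. Applied to `∑ β_k(x) tᵏ/k! = t e_λ^x(t)/(e_λ(t) - 1)` it therefore
gives `1`: it is `δ_{k0}` on `β_k`, and by linearity it extracts `a_0`. -/

lemma degFall_succ (lam : ℝ) (m : ℕ) :
    degFall lam (m + 1) = degFall lam m * (X - C (m * lam)) :=
  Finset.prod_range_succ _ _

lemma degFall_succ_comp_add_sub (lam : ℝ) (m : ℕ) :
    (degFall lam (m + 1)).comp (X + C lam) - degFall lam (m + 1)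
      = C ((m + 1) * lam) * degFall lam m := by
  have hshift : (degFall lam (m + 1)).comp (X + C lam) = degFall lam m * (X + C lam) := by
    rw [degFall, Polynomial.prod_comp, Finset.prod_range_succ', degFall]
    congr 1
    · refine Finset.prod_congr rfl fun i _ => ?_
      rw [sub_comp, X_comp, C_comp, Nat.cast_succ, add_one_mul, C_add]
      ring
    · simp
  rw [hshift, degFall_succ, C_mul, C_mul, C_add, map_natCast, map_one]
  ring

lemma degFall_succ_coeff_zero (lam : ℝ) (m : ℕ) : (degFall lam (m + 1)).coeff 0 = 0 := by
  simp [coeff_zero_eq_eval_zero, degFall, Finset.prod_range_succ', eval_prod]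

theorem Polynomial.eq_C_eval_zero_of_comp_X_add_C {R : Type*} [CommRing R] [IsDomain R]
    [CharZero R] {P : R[X]} {c : R} (hc : c ≠ 0)
    (hP : P.comp (X + C c) = P) : P = C (P.eval 0) := by
  have hmul : ∀ k : ℕ, P.eval (k * c) = P.eval 0 := by
    intro k
    induction k with
    | zero => simp
    | succ k ih =>
      calc P.eval ((k + 1 : ℕ) * c) = (P.comp (X + C c)).eval (k * c) := by simp [add_one_mul]
        _ = P.eval 0 := by rw [hP, ih]
  rw [← sub_eq_zero]
  refine eq_zero_of_infinite_isRoot _ (Set.infinite_of_injective_forall_mem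
    (f := fun k : ℕ => (k : R) * c) ?_ fun k => ?_)
  · intro a b hab
    exact_mod_cast mul_right_cancel₀ hc hab
  · simp [hmul]

section BernoulliPrimitive

variable {K : Type*} [Field K] [CharZero K]

noncomputable def scaledBernoulli (c : K) (i : ℕ) : K[X] :=
  C (c ^ i) * ((Polynomial.bernoulli i).map (algebraMap ℚ K)).comp (C c⁻¹ * X)

lemma scaledBernoulli_succ_comp_add_sub {c : K} (hc : c ≠ 0) (i : ℕ) :
    (scaledBernoulli c (i + 1)).comp (X + C c) - scaledBernoulli c (i + 1)
      = C ((i + 1) * c) * X ^ i := by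
  have hB := congrArg (Polynomial.map (algebraMap ℚ K)) (bernoulli_comp_one_add_X (i + 1))
  simp only [map_comp, Polynomial.map_add, Polynomial.map_one, Polynomial.map_X, nsmul_eq_mul,
    Polynomial.map_mul, Polynomial.map_natCast, Polynomial.map_pow, Nat.add_sub_cancel] at hB
  have hshift : (C c⁻¹ * X).comp (X + C c) = (1 + X).comp (C c⁻¹ * X) := by
    simp [mul_add, ← C_mul, inv_mul_cancel₀ hc, add_comm]
  rw [scaledBernoulli, mul_comp, C_comp, comp_assoc, hshift, ← comp_assoc, hB, add_comp,
    mul_add, add_sub_cancel_left, mul_comp, natCast_comp, pow_comp, X_comp, mul_pow, ← C_pow,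
    ← map_natCast C, ← mul_assoc, ← mul_assoc, ← C_mul, ← C_mul]
  congr 2
  rw [inv_pow]
  field_simp
  push_cast
  ring

lemma derivative_scaledBernoulli_succ {c : K} (hc : c ≠ 0) (i : ℕ) :
    derivative (scaledBernoulli c (i + 1)) = C (i + 1 : K) * scaledBernoulli c i := by
  rw [scaledBernoulli, scaledBernoulli, derivative_C_mul, derivative_comp, derivative_map,
    derivative_bernoulli_add_one]
  simp only [derivative_C_mul_X, Polynomial.map_mul, Polynomial.map_add, Polynomial.map_natCast,
    Polynomial.map_one, mul_comp, add_comp, natCast_comp, one_comp]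
  rw [← map_natCast C, ← C_1, ← C_add]
  simp only [← mul_assoc, ← C_mul]
  congr 2
  field_simp
  ring

lemma eval_scaledBernoulli (c : K) (i : ℕ) (z : K) :
    (scaledBernoulli c i).eval z
      = c ^ i * ((Polynomial.bernoulli i).map (algebraMap ℚ K)).eval (c⁻¹ * z) := by
  simp [scaledBernoulli]

noncomputable def bernoulliPrimitive (c : K) : K[X] →ₗ[K] K[X] :=
  lsum fun i => LinearMap.toSpanSingleton K K[X] (C (i + 1 : K)⁻¹ * scaledBernoulli c (i + 1))

lemma bernoulliPrimitive_monomial (c : K) (i : ℕ) (a : K) :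
    bernoulliPrimitive c (monomial i a) = a • (C (i + 1 : K)⁻¹ * scaledBernoulli c (i + 1)) := by
  simp [bernoulliPrimitive]

lemma bernoulliPrimitive_comp_add_sub {c : K} (hc : c ≠ 0) (q : K[X]) :
    (bernoulliPrimitive c q).comp (X + C c) - bernoulliPrimitive c q = C c * q := by
  induction q using Polynomial.induction_on' with
  | add p q hp hq => simp only [map_add, add_comp, mul_add, ← hp, ← hq]; abel
  | monomial i a =>
    rw [bernoulliPrimitive_monomial, smul_comp, ← smul_sub, mul_comp, C_comp, ← mul_sub,
      scaledBernoulli_succ_comp_add_sub hc, ← mul_assoc, ← C_mul,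
      inv_mul_cancel_left₀ (i.cast_add_one_ne_zero : (i : K) + 1 ≠ 0), smul_eq_C_mul,
      ← C_mul_X_pow_eq_monomial]
    ring

lemma derivative_bernoulliPrimitive {c : K} (hc : c ≠ 0) (q : K[X]) :
    derivative (bernoulliPrimitive c q) = q.sum fun i a => a • scaledBernoulli c i := by
  simp only [bernoulliPrimitive, lsum_apply, LinearMap.toSpanSingleton_apply, sum_def,
    derivative_sum, derivative_smul, derivative_C_mul, derivative_scaledBernoulli_succ hc,
    ← mul_assoc, ← C_mul, fun n : ℕ => inv_mul_cancel₀ (n.cast_add_one_ne_zero : (n : K) + 1 ≠ 0),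
    C_1, one_mul]

lemma eval_one_sub_eval_zero_bernoulliPrimitive {c : K} (hc : c ≠ 0) {q Q : K[X]}
    (hQ : Q.comp (X + C c) - Q = C c * q) :
    (bernoulliPrimitive c q).eval 1 - (bernoulliPrimitive c q).eval 0 = Q.eval 1 - Q.eval 0 := by
  set P := bernoulliPrimitive c q - Q
  have hP : P.comp (X + C c) = P := by
    rw [← sub_eq_zero, sub_comp, sub_sub_sub_comm, bernoulliPrimitive_comp_add_sub hc, hQ, sub_self]
  have := congrArg (eval 1) (eq_C_eval_zero_of_comp_X_add_C hc hP)
  simp only [P, eval_sub, eval_C] at this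
  linear_combination this

end BernoulliPrimitive

lemma integral_eval_derivative (Q : ℂ[X]) (a b : ℝ) :
    ∫ u in a..b, (derivative Q).eval (u : ℂ) = Q.eval (b : ℂ) - Q.eval (a : ℂ) :=
  intervalIntegral.integral_eq_sub_of_hasDerivAt (fun u _ => (Q.hasDerivAt u).comp_ofReal)
    (((derivative Q).continuous.comp Complex.continuous_ofReal).intervalIntegrable _ _)

lemma PowerSeries.linearMap_coeff_mul_map_C {R A : Type*} [CommSemiring R] [Semiring A]
    [Algebra R A] (L : R[X] →ₗ[R] A) (F : PowerSeries R[X]) (g : PowerSeries R) (n : ℕ) :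
    L (coeff n (F * map Polynomial.C g))
      = coeff n (mk (fun k => L (coeff k F)) * map (algebraMap R A) g) := by
  simp only [coeff_mul, map_sum, coeff_map, coeff_mk]
  refine Finset.sum_congr rfl fun x _ => ?_
  rw [mul_comm, ← Polynomial.smul_eq_C_mul, map_smul, Algebra.smul_def, Algebra.commutes]

noncomputable def degExp (lam : ℝ) : PowerSeries ℝ :=
  PowerSeries.mk fun n => (n.factorial : ℝ)⁻¹ * (degFall lam n).eval 1

lemma degExpOne_eq_map_C (lam : ℝ) : degExpOne lam = PowerSeries.map C (degExp lam) := by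
  ext n
  simp [degExpOne, degExp]

theorem IsDegBernoulli.linearMap_apply_eq_ite {K : Type*} [Field K] [Algebra ℝ K] {lam : ℝ}
    {β : ℕ → ℝ[X]} (hβ : IsDegBernoulli lam 1 β) (L : ℝ[X] →ₗ[ℝ] K)
    (hL : ∀ m : ℕ, L (degFall lam m) = algebraMap ℝ K ((degFall lam (m + 1)).eval 1 / (m + 1)))
    (k : ℕ) : L (β k) = if k = 0 then 1 else 0 := by
  set E := PowerSeries.map (algebraMap ℝ K) (degExp lam - 1)
  set G := PowerSeries.mk fun j => L ((j.factorial : ℝ)⁻¹ • β j)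
  have hGE : G * E = E := by
    ext N
    have h := congrArg (fun F => L (PowerSeries.coeff N F)) hβ
    simp only [pow_one, degExpOne_eq_map_C, ← map_one (PowerSeries.map C), ← map_sub,
      PowerSeries.linearMap_coeff_mul_map_C, PowerSeries.coeff_mk] at h
    rw [h, PowerSeries.coeff_map, map_sub, PowerSeries.coeff_one, degExp, PowerSeries.coeff_mk]
    cases N with
    | zero => simp [degFall]
    | succ N =>
      rw [PowerSeries.coeff_succ_X_mul, degExpX, PowerSeries.coeff_mk, map_smul, hL,
        Algebra.smul_def, ← map_mul, if_neg N.succ_ne_zero, sub_zero, Nat.factorial_succ]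
      congr 1
      push_cast
      field_simp
  have hE : E ≠ 0 := by
    intro h0
    have := congrArg (PowerSeries.coeff 1) h0
    simp [E, degExp, degFall] at this
  have hG : G = 1 := mul_right_cancel₀ hE (hGE.trans (one_mul E).symm)
  have := congrArg (PowerSeries.coeff k) hG
  simp only [G, PowerSeries.coeff_mk, PowerSeries.coeff_one, map_smul] at this
  rcases k with _ | k <;> simpa [Nat.factorial_ne_zero] using this

lemma eval_one_sub_eval_zero_bernoulliPrimitive_map_degFall {lam : ℝ} (hlam : lam ≠ 0) (m : ℕ) :
    (bernoulliPrimitive (lam : ℂ) ((degFall lam m).map (algebraMap ℝ ℂ))).eval 1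
      - (bernoulliPrimitive (lam : ℂ) ((degFall lam m).map (algebraMap ℝ ℂ))).eval 0
      = (((degFall lam (m + 1)).eval 1 / (m + 1) : ℝ) : ℂ) := by
  set Q : ℂ[X] := C ((m + 1 : ℂ)⁻¹) * (degFall lam (m + 1)).map (algebraMap ℝ ℂ)
  have hQ : Q.comp (X + C (lam : ℂ)) - Q = C (lam : ℂ) * (degFall lam m).map (algebraMap ℝ ℂ) := by
    have := congrArg (Polynomial.map (algebraMap ℝ ℂ)) (degFall_succ_comp_add_sub lam m)
    simp only [map_comp, Polynomial.map_sub, Polynomial.map_add, Polynomial.map_mul, map_X,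
      Polynomial.map_C, Complex.coe_algebraMap] at this
    rw [mul_comp, C_comp, ← mul_sub, this, ← mul_assoc, ← C_mul]
    congr 2
    push_cast
    field_simp
  rw [eval_one_sub_eval_zero_bernoulliPrimitive (Complex.ofReal_ne_zero.2 hlam) hQ]
  simp only [Q, eval_mul, eval_C, eval_map, eval₂_at_one, eval₂_at_zero,
    degFall_succ_coeff_zero, map_zero, mul_zero, sub_zero, Complex.coe_algebraMap]
  push_cast
  ring

lemma integral_sum_bernoulli_eq_sub_eval {lam : ℝ} (hlam : lam ≠ 0) {p : ℂ[X]} {n : ℕ}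
    (hp : p.natDegree < n + 1) :
    ∫ u in (0:ℝ)..1, ∑ i ∈ Finset.range (n + 1),
        p.coeff i * (lam : ℂ) ^ i *
          ((Polynomial.bernoulli i).map (algebraMap ℚ ℂ)).eval (((u / lam : ℝ) : ℂ))
      = (bernoulliPrimitive (lam : ℂ) p).eval 1 - (bernoulliPrimitive (lam : ℂ) p).eval 0 := by
  rw [← Complex.ofReal_one, ← Complex.ofReal_zero, ← integral_eval_derivative]
  congr 1
  ext u
  rw [derivative_bernoulliPrimitive (Complex.ofReal_ne_zero.2 hlam),
    sum_over_range' _ (fun _ => zero_smul ℂ (scaledBernoulli _ _)) _ hp, eval_finsetSum]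
  refine Finset.sum_congr rfl fun i _ => ?_
  rw [eval_smul, eval_scaledBernoulli, smul_eq_mul, mul_assoc, Complex.ofReal_div, div_eq_inv_mul]

/-- If `deg p = n` and `p(x) = ∑_{k=0}^n a_k β_{k,λ}(x)`, then
`a_0 = ∫_0^1 ∑_{i=0}^n b_i λ^i B_i(u/λ) du`, where `p(x) = ∑ b_i x^i` and `B_i` is the
`i`-th Bernoulli polynomial. -/
theorem degBernoulli_coeff_zero (lam : ℝ) (hlam : lam ≠ 0) (β : ℕ → Polynomial ℝ)
    (hβ : IsDegBernoulli lam 1 β) (n : ℕ) (p : Polynomial ℂ) (hdeg : p.natDegree = n)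
    (a : ℕ → ℂ) (hp : p = ∑ k ∈ Finset.range (n + 1), a k • (β k).map (algebraMap ℝ ℂ)) :
    a 0 = ∫ u in (0:ℝ)..1, ∑ i ∈ Finset.range (n + 1),
        p.coeff i * (lam : ℂ) ^ i *
          ((Polynomial.bernoulli i).map (algebraMap ℚ ℂ)).eval (((u / lam : ℝ) : ℂ)) := by
  let L : ℂ[X] →ₗ[ℂ] ℂ := (leval 1 - leval 0) ∘ₗ bernoulliPrimitive (lam : ℂ)
  have hLβ (k : ℕ) : L ((β k).map (algebraMap ℝ ℂ)) = if k = 0 then 1 else 0 :=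
    hβ.linearMap_apply_eq_ite (L.restrictScalars ℝ ∘ₗ (mapAlg ℝ ℂ).toLinearMap)
      (eval_one_sub_eval_zero_bernoulliPrimitive_map_degFall hlam) k
  rw [integral_sum_bernoulli_eq_sub_eval hlam (hdeg ▸ n.lt_succ_self)]
  change a 0 = L p
  simp [hp, hLβ]
end

section
/- For positive integers n, a and r ≥ 0, the a-fold iterated integral operator I^a (where I q(x) = ∫_x^{x+1} q(u) du) applied to the polynomial x ↦ B_n^{(r)}(x/λ) satisfies I^a B_n^{(r)}(x/λ) = (λ^a/⟨n+1⟩_a) ∑_{m=0}^{a} (−1)^{a−m} C(a,m) B_{n+a}^{(r)}((x+m)/λ), where ⟨n+1⟩_a = (n+1)(n+2)⋯(n+a). -/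
open Polynomial

/-- The Bernoulli polynomials of order `r`, defined by
`(t/(e^t−1))^r e^{xt} = ∑_{n≥0} B_n^{(r)}(x) t^n/n!`; equivalently `B_n^{(0)}(x) = x^n` and
`B_n^{(r+1)}(x) = ∑_{k=0}^n C(n,k) B_k^{(r)}(0) B_{n-k}(x)` (multiplicativity of the
generating functions). -/
noncomputable def bernoulliHO : ℕ → ℕ → Polynomial ℚ
  | 0, n => Polynomial.X ^ n
  | r + 1, n => ∑ k ∈ Finset.range (n + 1),
      ((n.choose k : ℚ) * (bernoulliHO r k).eval 0) • Polynomial.bernoulli (n - k)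

/-- The integral operator `I q(x) = ∫_x^{x+1} q(u) du` on functions. -/
noncomputable def Iop (f : ℝ → ℝ) : ℝ → ℝ := fun x => ∫ u in x..(x + 1), f u

/-! With `F_b(y) = λ^b / ⟨n+1⟩_b · B_{n+b}^{(r)}(y/λ)`, the Appell property
`(B_{k+1}^{(r)})' = (k+1) B_k^{(r)}` gives `F_{b+1}' = F_b`, so by the fundamental theorem of
calculus `I F_b = Δ F_{b+1}`, where `Δ` is the forward difference with step `1`. As `I` commutes
with `Δ`, induction on `a` gives `I^a F_0 = Δ^a F_a`, and expanding `Δ^a` by the binomial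
theorem gives the formula. -/

open Finset

theorem Polynomial.derivative_sum_range_choose_smul {R : Type*} [CommRing R] (c : ℕ → R)
    (P : ℕ → R[X]) (hP : ∀ k, derivative (P k) = k * P (k - 1)) (n : ℕ) :
    derivative (∑ j ∈ range (n + 1 + 1), (((n + 1).choose j : R) * c j) • P (n + 1 - j)) =
      (n + 1) * ∑ j ∈ range (n + 1), ((n.choose j : R) * c j) • P (n - j) := by
  rw [derivative_sum, sum_range_succ, Nat.sub_self, derivative_smul, hP 0, Nat.cast_zero,
    zero_mul, smul_zero, add_zero, mul_sum]
  refine sum_congr rfl fun j hj => ?_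
  have hjn : j ≤ n := Nat.lt_succ_iff.mp (mem_range.mp hj)
  have hchoose : ((n + 1).choose j : R) * (n + 1 - j : ℕ) = (n.choose j : R) * (n + 1) := by
    rw [← Nat.cast_mul, ← Nat.choose_mul_succ_eq]
    push_cast
    ring
  rw [derivative_smul, hP, show n + 1 - j - 1 = n - j by omega, smul_eq_C_mul, smul_eq_C_mul,
    ← mul_assoc, ← mul_assoc, ← C_eq_natCast, ← C_eq_natCast, ← C_1, ← C_add, ← C_mul, ← C_mul]
  congr 2
  linear_combination c j * hchoose

theorem derivative_bernoulliHO_succ (r k : ℕ) :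
    derivative (bernoulliHO r (k + 1)) = (k + 1) * bernoulliHO r k := by
  cases r with
  | zero => simp [bernoulliHO]
  | succ r =>
    exact derivative_sum_range_choose_smul (fun j => (bernoulliHO r j).eval 0) bernoulli
      derivative_bernoulli k

theorem hasDerivAt_eval_map_bernoulliHO_div (lam : ℝ) (r k : ℕ) (y : ℝ) :
    HasDerivAt (fun y => ((bernoulliHO r (k + 1)).map (algebraMap ℚ ℝ)).eval (y / lam))
      ((k + 1) / lam * ((bernoulliHO r k).map (algebraMap ℚ ℝ)).eval (y / lam)) y := by
  have h := ((bernoulliHO r (k + 1)).map (algebraMap ℚ ℝ)).hasDerivAt (y / lam) |>.comp y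
    ((hasDerivAt_id y).div_const lam)
  rw [derivative_map, derivative_bernoulliHO_succ] at h
  refine h.congr_deriv ?_
  simp only [Polynomial.map_mul, eval_mul, Polynomial.map_add, Polynomial.map_natCast,
    Polynomial.map_one, eval_add, eval_natCast, eval_one]
  ring

theorem Iop_eq_fwdDiff_of_hasDerivAt {f F : ℝ → ℝ} (hF : ∀ y, HasDerivAt F (f y) y)
    (hf : Continuous f) : Iop f = fwdDiff 1 F :=
  funext fun _ =>
    intervalIntegral.integral_eq_sub_of_hasDerivAt (fun y _ => hF y) (hf.intervalIntegrable _ _)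

theorem Iop_fwdDiff {g : ℝ → ℝ} (hg : Continuous g) (h : ℝ) :
    Iop (fwdDiff h g) = fwdDiff h (Iop g) := by
  funext x
  simp only [Iop, fwdDiff]
  have hgh : IntervalIntegrable (fun u => g (u + h)) MeasureTheory.volume x (x + 1) :=
    (hg.comp (continuous_add_const h)).intervalIntegrable _ _
  rw [intervalIntegral.integral_sub hgh (hg.intervalIntegrable _ _),
    intervalIntegral.integral_comp_add_right, add_right_comm]

theorem Iop_fwdDiff_iterate {g : ℝ → ℝ} (hg : Continuous g) (h : ℝ) (k : ℕ) :
    Iop ((fwdDiff h)^[k] g) = (fwdDiff h)^[k] (Iop g) := by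
  induction k generalizing g with
  | zero => rfl
  | succ k ih =>
    rw [Function.iterate_succ_apply, Function.iterate_succ_apply,
      ih (g := fwdDiff h g) ((hg.comp (continuous_add_const h)).sub hg), Iop_fwdDiff hg]

theorem Iop_iterate_eq_fwdDiff_iterate {F : ℕ → ℝ → ℝ}
    (hF : ∀ b y, HasDerivAt (F (b + 1)) (F b y) y) (hc : ∀ b, Continuous (F b)) (a : ℕ) :
    Iop^[a] (F 0) = (fwdDiff 1)^[a] (F a) := by
  induction a with
  | zero => rfl
  | succ a ih =>
    rw [Function.iterate_succ_apply', ih, Iop_fwdDiff_iterate (hc a),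
      Iop_eq_fwdDiff_of_hasDerivAt (hF a) (hc a), ← Function.iterate_succ_apply]

noncomputable def bernoulliHOAntideriv (lam : ℝ) (r n b : ℕ) (y : ℝ) : ℝ :=
  (lam ^ b / ∏ i ∈ range b, ((n : ℝ) + 1 + i)) *
    ((bernoulliHO r (n + b)).map (algebraMap ℚ ℝ)).eval (y / lam)

theorem bernoulliHOAntideriv_zero (lam : ℝ) (r n : ℕ) :
    bernoulliHOAntideriv lam r n 0 =
      fun y => ((bernoulliHO r n).map (algebraMap ℚ ℝ)).eval (y / lam) := by
  funext y
  simp [bernoulliHOAntideriv]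

theorem continuous_bernoulliHOAntideriv (lam : ℝ) (r n b : ℕ) :
    Continuous (bernoulliHOAntideriv lam r n b) :=
  continuous_const.mul (((bernoulliHO r (n + b)).map (algebraMap ℚ ℝ)).continuous.comp
    (continuous_id.div_const lam))

theorem hasDerivAt_bernoulliHOAntideriv {lam : ℝ} (hlam : lam ≠ 0) (r n b : ℕ) (y : ℝ) :
    HasDerivAt (bernoulliHOAntideriv lam r n (b + 1)) (bernoulliHOAntideriv lam r n b y) y := by
  refine ((hasDerivAt_eval_map_bernoulliHO_div lam r (n + b) y).const_mul
    (lam ^ (b + 1) / ∏ i ∈ range (b + 1), ((n : ℝ) + 1 + i))).congr_deriv ?_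
  have hnb : (n : ℝ) + 1 + b ≠ 0 := by positivity
  simp only [bernoulliHOAntideriv, prod_range_succ]
  push_cast
  field_simp
  ring

theorem iterated_integral_bernoulliHO_general (lam : ℝ) (hlam : lam ≠ 0) (n a r : ℕ) (x : ℝ) :
    Iop^[a] (fun y => ((bernoulliHO r n).map (algebraMap ℚ ℝ)).eval (y / lam)) x =
      (lam ^ a / ∏ i ∈ Finset.range a, ((n : ℝ) + 1 + i)) *
        ∑ m ∈ Finset.range (a + 1), (-1 : ℝ) ^ (a - m) * (a.choose m : ℝ) *
          ((bernoulliHO r (n + a)).map (algebraMap ℚ ℝ)).eval ((x + m) / lam) := by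
  rw [← bernoulliHOAntideriv_zero, Iop_iterate_eq_fwdDiff_iterate
    (hasDerivAt_bernoulliHOAntideriv hlam r n) (continuous_bernoulliHOAntideriv lam r n),
    fwdDiff_iter_eq_sum_shift, mul_sum]
  refine sum_congr rfl fun m _ => ?_
  rw [zsmul_eq_mul, nsmul_eq_mul, mul_one, bernoulliHOAntideriv]
  push_cast
  ring

/-- For positive integers `n, a`, `r ≥ 0` and `λ ≠ 0`,
`I^a B_n^{(r)}(x/λ) = (λ^a/⟨n+1⟩_a) ∑_{m=0}^a (−1)^{a−m} C(a,m) B_{n+a}^{(r)}((x+m)/λ)`,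
where `⟨n+1⟩_a = (n+1)(n+2)⋯(n+a)`. -/
theorem iterated_integral_bernoulliHO (lam : ℝ) (hlam : lam ≠ 0) (n a r : ℕ)
    (hn : 1 ≤ n) (ha : 1 ≤ a) (x : ℝ) :
    Iop^[a] (fun y => ((bernoulliHO r n).map (algebraMap ℚ ℝ)).eval (y / lam)) x =
      (lam ^ a / ∏ i ∈ Finset.range a, ((n : ℝ) + 1 + i)) *
        ∑ m ∈ Finset.range (a + 1), (-1 : ℝ) ^ (a - m) * (a.choose m : ℝ) *
          ((bernoulliHO r (n + a)).map (algebraMap ℚ ℝ)).eval ((x + m) / lam) :=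
  iterated_integral_bernoulliHO_general lam hlam n a r x
end
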